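/- arXiv:math/0305396 — 8 statements merged into one kernel-verified Lean document; each statement's English description precedes it below -/
import Mathlib

section
/- Let n be a positive integer, τ = i·√n ∈ ℂ, and k = ℚ(τ) ⊆ ℂ (an imaginary quadratic field). Let Γ ⊆ k² ⊆ ℂ² be an additive subgroup that is free of rank 3 and discrete in ℂ². Then there exist a one-dimensional complex linear subspace L ⊆ ℂ² and an element γ₀ ∈ Γ such that: L ∩ Γ is free of rank 2; Γ is the internal direct sum of L ∩ Γ and ℤ·γ₀ (every γ ∈ Γ is uniquely γ' + m·γ₀ with γ' ∈ L ∩ Γ and m ∈ ℤ); and for some (equivalently, any) ℂ-linear isomorphism φ : L → ℂ there exists μ ∈ ℂ, μ ≠ 0, with μ·φ(L ∩ Γ) ⊆ ℤ + ℤ·τ. -/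
/-!
The ℚ-span `V` of `Γ` is a 3-dimensional subspace of the 4-dimensional ℚ-space `k²`, so `V` and
`τ⁻¹V` meet in a nonzero vector `u`: both `u` and `τu` lie in `V`. The line `L = ℂu` meets `k²` in
`k u = ℚu + ℚτu ⊆ V`, hence `L ∩ Γ` has rank 2; it is saturated in `Γ`, so `Γ / (L ∩ Γ)` is
torsion-free of rank 1, i.e. `≅ ℤ`, and any lift `γ₀` of a generator splits `Γ`. Finally `L ∩ Γ`
is a finitely generated subgroup of `ℚu + ℚτu`, so `d (L ∩ Γ) ⊆ ℤu + ℤτu` for some `d ≠ 0`, and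
`μ = d / φ(u)` works.
-/

open Module Submodule
open scoped IntermediateField

section RatSpan

variable {E : Type*} [AddCommGroup E] [Module ℚ E]

theorem Submodule.exists_nsmul_mem_span_int_of_mem_span_rat {s : Set E} {x : E}
    (hx : x ∈ span ℚ s) :
    ∃ d : ℕ, d ≠ 0 ∧ d • x ∈ span ℤ s := by
  induction hx using Submodule.span_induction with
  | mem x hx => exact ⟨1, one_ne_zero, by simpa using subset_span hx⟩
  | zero => exact ⟨1, one_ne_zero, by simp⟩
  | add x y _ _ hx hy =>
    obtain ⟨d, hd, hdx⟩ := hx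
    obtain ⟨e, he, hey⟩ := hy
    refine ⟨d * e, mul_ne_zero hd he, ?_⟩
    rw [smul_add, mul_comm d e, mul_smul, mul_comm e d, mul_smul d e y]
    exact add_mem (nsmul_mem hdx e) (nsmul_mem hey d)
  | smul q x _ hx =>
    obtain ⟨d, hd, hdx⟩ := hx
    refine ⟨q.den * d, mul_ne_zero q.den_ne_zero hd, ?_⟩
    have : (q.den * d) • q • x = q.num • d • x := by
      rw [← Nat.cast_smul_eq_nsmul ℚ, ← Nat.cast_smul_eq_nsmul ℚ d, ← Int.cast_smul_eq_zsmul ℚ,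
        smul_smul, smul_smul]
      congr 1
      push_cast
      rw [mul_right_comm, Rat.den_mul_eq_num]
    rw [this]
    exact smul_mem _ _ hdx

theorem Submodule.FG.exists_nsmul_mem_span_int {M : Submodule ℤ E} (hM : M.FG) {s : Set E}
    (hMs : ∀ x ∈ M, x ∈ span ℚ s) : ∃ d : ℕ, d ≠ 0 ∧ ∀ x ∈ M, d • x ∈ span ℤ s := by
  induction M, hM using Submodule.fg_induction with
  | singleton x =>
    obtain ⟨d, hd, hdx⟩ :=
      exists_nsmul_mem_span_int_of_mem_span_rat (hMs x (mem_span_singleton_self x))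
    refine ⟨d, hd, fun y hy => ?_⟩
    obtain ⟨c, rfl⟩ := mem_span_singleton.1 hy
    rw [smul_comm]
    exact smul_mem _ _ hdx
  | sup M₁ M₂ _ _ ih₁ ih₂ =>
    obtain ⟨d, hd, h₁⟩ := ih₁ fun x hx => hMs x (mem_sup_left hx)
    obtain ⟨e, he, h₂⟩ := ih₂ fun x hx => hMs x (mem_sup_right hx)
    refine ⟨d * e, mul_ne_zero hd he, fun x hx => ?_⟩
    obtain ⟨y, hy, z, hz, rfl⟩ := mem_sup.1 hx
    rw [smul_add, mul_comm d e, mul_smul, mul_comm e d, mul_smul d e z]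
    exact add_mem (nsmul_mem (h₁ y hy) e) (nsmul_mem (h₂ z hz) d)

theorem Submodule.mem_of_zsmul_mem (P : Submodule ℚ E) {c : ℤ} (hc : c ≠ 0) {x : E}
    (h : c • x ∈ P) : x ∈ P := by
  rw [← Int.cast_smul_eq_zsmul ℚ] at h
  simpa [hc] using P.smul_mem (c : ℚ)⁻¹ h

theorem Submodule.span_rat_inf_eq_of_le (Γ : AddSubgroup E) {P : Submodule ℚ E}
    (hP : P ≤ span ℚ (Γ : Set E)) :
    span ℚ ((P.toAddSubgroup ⊓ Γ : AddSubgroup E) : Set E) = P := by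
  refine le_antisymm (span_le.2 fun x hx => hx.1) fun p hp => ?_
  obtain ⟨d, hd, hdp⟩ := exists_nsmul_mem_span_int_of_mem_span_rat (hP hp)
  have hdΓ : d • p ∈ Γ := by rwa [← span_int_eq Γ]
  have : d • p ∈ span ℚ ((P.toAddSubgroup ⊓ Γ : AddSubgroup E) : Set E) :=
    subset_span ⟨nsmul_mem hp d, hdΓ⟩
  rw [← Nat.cast_smul_eq_nsmul ℚ] at this
  simpa [smul_smul, hd] using smul_mem _ (d : ℚ)⁻¹ this

theorem Submodule.nonempty_basis_inf_of_le_span_rat (P : Submodule ℚ E) (Γ : AddSubgroup E)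
    [Module.Finite ℤ Γ] (hP : P ≤ span ℚ (Γ : Set E)) :
    Nonempty (Basis (Fin (finrank ℚ P)) ℤ (P.toAddSubgroup ⊓ Γ : AddSubgroup E)) := by
  have := IsAddTorsionFree.of_module_rat (M := E)
  set Λ := (P.toAddSubgroup ⊓ Γ).toIntSubmodule
  have : Module.Finite ℤ Γ.toIntSubmodule := ‹Module.Finite ℤ Γ›
  have : IsNoetherian ℤ Λ := isNoetherian_of_le (t := Γ.toIntSubmodule) fun x hx => hx.2
  have h := finrank_span_eq_finrank (A := ℚ) Λ
  exact ⟨finBasisOfFinrankEq ℤ Λ <| h.symm.trans <|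
    congrArg (fun S : Submodule ℚ E => finrank ℚ S) (span_rat_inf_eq_of_le Γ hP)⟩

end RatSpan

theorem Submodule.exists_surjective_linearMap_ker_eq {R G : Type*} [CommRing R] [IsDomain R]
    [IsPrincipalIdealRing R] [AddCommGroup G] [Module R G] [Module.Finite R G] (N : Submodule R G)
    (hsat : ∀ (c : R) (g : G), c ≠ 0 → c • g ∈ N → g ∈ N) (hrank : finrank R N + 1 = finrank R G) :
    ∃ f : G →ₗ[R] R, Function.Surjective f ∧ LinearMap.ker f = N := by
  have : IsTorsionFree R (G ⧸ N) := .of_smul_eq_zero fun c x hcx => by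
    induction x using Submodule.Quotient.induction_on with | H g => ?_
    rw [← Submodule.Quotient.mk_smul, Submodule.Quotient.mk_eq_zero] at hcx
    rw [Submodule.Quotient.mk_eq_zero, or_iff_not_imp_left]
    exact fun hc => hsat c g hc hcx
  have hquot : finrank R (G ⧸ N) = 1 := by
    have := N.finrank_quotient_add_finrank
    omega
  let e : (G ⧸ N) ≃ₗ[R] R :=
    (finBasisOfFinrankEq R (G ⧸ N) hquot).repr ≪≫ₗ Finsupp.uniqueLinearEquiv R R 0
  refine ⟨e.toLinearMap ∘ₗ N.mkQ, e.surjective.comp N.mkQ_surjective, ?_⟩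
  rw [LinearMap.ker_comp, LinearEquiv.ker, Submodule.comap_bot, Submodule.ker_mkQ]

theorem AddSubgroup.exists_unique_add_zsmul_of_saturated {E : Type*} [AddCommGroup E]
    {Γ Λ : AddSubgroup E} [Module.Finite ℤ Γ] (hΛΓ : Λ ≤ Γ)
    (hsat : ∀ x ∈ Γ, ∀ c : ℤ, c ≠ 0 → c • x ∈ Λ → x ∈ Λ)
    (hrank : finrank ℤ Λ + 1 = finrank ℤ Γ) :
    ∃ γ₀ ∈ Γ, ∀ γ ∈ Γ, ∃! q : Λ × ℤ, (q.1 : E) + q.2 • γ₀ = γ := by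
  set N := (Λ.addSubgroupOf Γ).toIntSubmodule
  have hN : ∀ x : Γ, x ∈ N ↔ (x : E) ∈ Λ := fun x => AddSubgroup.mem_addSubgroupOf
  obtain ⟨f, hf, hker⟩ := N.exists_surjective_linearMap_ker_eq
    (fun c x hc hcx => (hN x).2 (hsat x x.2 c hc ((hN _).1 hcx)))
    (hrank ▸ congrArg (· + 1) (AddSubgroup.addSubgroupOfEquivOfLe hΛΓ).toIntLinearEquiv.finrank_eq)
  have hfΛ : ∀ x : Γ, f x = 0 ↔ (x : E) ∈ Λ := fun x => by
    rw [← LinearMap.mem_ker, hker, hN]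
  obtain ⟨γ₀, hγ₀⟩ := hf 1
  refine ⟨γ₀, γ₀.2, fun γ hγ => ?_⟩
  set m := f ⟨γ, hγ⟩
  have hmem : γ - m • (γ₀ : E) ∈ Λ := by
    have := (hfΛ (⟨γ, hγ⟩ - m • γ₀)).1 (by simp [hγ₀, m])
    simpa using this
  refine ⟨(⟨_, hmem⟩, m), by simp, fun ⟨p, c⟩ hpc => ?_⟩
  have hc : c = m := by
    have hsum : (⟨p, hΛΓ p.2⟩ : Γ) + c • γ₀ = ⟨γ, hγ⟩ := Subtype.ext hpc
    have := congrArg f hsum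
    rwa [map_add, map_zsmul, (hfΛ _).2 p.2, hγ₀, zero_add, smul_eq_mul, mul_one] at this
  subst hc
  exact Prod.ext (Subtype.ext (eq_sub_of_add_eq hpc)) rfl

theorem IntermediateField.adjoin_le_span_pair {F K : Type*} [Field F] [Field K]
    [Algebra F K] {α : K} {c : F} (hα : α * α = algebraMap F K c) :
    Subalgebra.toSubmodule F⟮α⟯.toSubalgebra ≤ span F {1, α} := by
  intro z hz
  have halg : IsAlgebraic F α := ⟨.X ^ 2 - .C c, Polynomial.X_pow_sub_C_ne_zero two_pos c,
    by simp [sq, hα]⟩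
  rw [Subalgebra.mem_toSubmodule, adjoin_simple_toSubalgebra_of_isAlgebraic halg] at hz
  induction hz using Algebra.adjoin_induction with
  | mem x hx => exact subset_span (by simp_all)
  | algebraMap r => exact mem_span_pair.2 ⟨r, 0, by simp [Algebra.smul_def]⟩
  | add x y _ _ hx hy => exact add_mem hx hy
  | mul x y _ _ hx hy =>
    obtain ⟨a, b, rfl⟩ := mem_span_pair.1 hx
    obtain ⟨a', b', rfl⟩ := mem_span_pair.1 hy
    refine mem_span_pair.2 ⟨a * a' + b * b' * c, a * b' + b * a', ?_⟩
    simp only [Algebra.smul_def, map_add, map_mul, mul_one]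
    linear_combination (-(algebraMap F K b * algebraMap F K b')) * hα

theorem Submodule.exists_ne_zero_mem_and_apply_mem {k E : Type*} [Field k] [AddCommGroup E]
    [Module k E] (T : E ≃ₗ[k] E) {V W : Submodule k E} [FiniteDimensional k W] (hV : V ≤ W)
    (hTV : V.comap T.toLinearMap ≤ W) (h : finrank k W < 2 * finrank k V) :
    ∃ u ≠ 0, u ∈ V ∧ T u ∈ V := by
  have : FiniteDimensional k V := finiteDimensional_of_le hV
  have : FiniteDimensional k (V.comap T.toLinearMap) := finiteDimensional_of_le hTV
  have hT : finrank k (V.comap T.toLinearMap) = finrank k V := by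
    rw [comap_equiv_eq_map_symm, LinearEquiv.finrank_map_eq]
  have hsup := finrank_mono (sup_le hV hTV)
  have hinf := finrank_sup_add_finrank_inf_eq V (V.comap T.toLinearMap)
  obtain ⟨u, hu, hu0⟩ := exists_mem_ne_zero_of_ne_bot (p := V ⊓ V.comap T.toLinearMap) fun h' => by
    rw [h', finrank_bot] at hinf
    omega
  exact ⟨u, hu0, hu.1, hu.2⟩

theorem exists_ne_zero_mem_span_rat_and_smul_mem {τ : ℂ} (hτ : τ ≠ 0)
    {K : IntermediateField ℚ ℂ} [FiniteDimensional ℚ K] (hτK : τ ∈ K) (Γ : AddSubgroup (ℂ × ℂ))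
    [Free ℤ Γ] [Module.Finite ℤ Γ] (hΓK : ∀ γ ∈ Γ, γ.1 ∈ K ∧ γ.2 ∈ K)
    (hrank : finrank ℚ K < finrank ℤ Γ) :
    ∃ u ≠ 0, u ∈ span ℚ (Γ : Set (ℂ × ℂ)) ∧ τ • u ∈ span ℚ (Γ : Set (ℂ × ℂ)) := by
  set K' := Subalgebra.toSubmodule K.toSubalgebra
  have : FiniteDimensional ℚ K' := ‹FiniteDimensional ℚ K›
  have hVW : span ℚ (Γ : Set (ℂ × ℂ)) ≤ K'.prod K' := span_le.2 hΓK
  have hKK : K'.prod K' = LinearMap.range (K'.subtype.prodMap K'.subtype) := by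
    rw [LinearMap.range_prodMap, range_subtype]
  have : FiniteDimensional ℚ (K'.prod K') := hKK ▸ inferInstance
  have hW : finrank ℚ (K'.prod K') ≤ 2 * finrank ℚ K := by
    rw [hKK, two_mul, ← finrank_prod]
    exact LinearMap.finrank_range_le _
  have : Free ℤ Γ.toIntSubmodule := ‹Free ℤ Γ›
  have : Module.Finite ℤ Γ.toIntSubmodule := ‹Module.Finite ℤ Γ›
  have hV : finrank ℚ (span ℚ (Γ : Set (ℂ × ℂ))) = finrank ℤ Γ :=
    finrank_span_eq_finrank (A := ℚ) Γ.toIntSubmodule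
  refine exists_ne_zero_mem_and_apply_mem ((LinearEquiv.smulOfNeZero ℂ _ τ hτ).restrictScalars ℚ)
    hVW (fun x hx => ?_) (by omega)
  have hx' : τ⁻¹ • τ • x ∈ K'.prod K' := by
    obtain ⟨h₁, h₂⟩ := hVW hx
    exact ⟨K.mul_mem (K.inv_mem hτK) h₁, K.mul_mem (K.inv_mem hτK) h₂⟩
  rwa [inv_smul_smul₀ hτ] at hx'

theorem span_singleton_inf_eq_span_pair_inf {τ : ℂ} {K : IntermediateField ℚ ℂ}
    (hK : ∀ z ∈ K, z ∈ span ℚ {1, τ}) {Γ : AddSubgroup (ℂ × ℂ)}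
    (hΓK : ∀ γ ∈ Γ, γ.1 ∈ K ∧ γ.2 ∈ K) {u : ℂ × ℂ} (hu : u ≠ 0)
    (huΓ : u ∈ span ℚ (Γ : Set (ℂ × ℂ))) :
    (ℂ ∙ u).toAddSubgroup ⊓ Γ = (span ℚ {u, τ • u}).toAddSubgroup ⊓ Γ := by
  set K' := Subalgebra.toSubmodule K.toSubalgebra
  have huK : u.1 ∈ K ∧ u.2 ∈ K := (span_le (p := K'.prod K')).2 hΓK huΓ
  apply le_antisymm
  · rintro x ⟨hxL, hxΓ⟩
    refine ⟨?_, hxΓ⟩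
    obtain ⟨c, rfl⟩ := mem_span_singleton.1 hxL
    have hc : c ∈ K := by
      obtain ⟨h₁, h₂⟩ := hΓK _ hxΓ
      by_cases hu₁ : u.1 = 0
      · have hu₂ : u.2 ≠ 0 := fun h => hu (Prod.ext hu₁ h)
        simpa [hu₂] using K.div_mem h₂ huK.2
      · simpa [hu₁] using K.div_mem h₁ huK.1
    obtain ⟨a, b, rfl⟩ := mem_span_pair.1 (hK c hc)
    exact mem_span_pair.2 ⟨a, b, by simp [add_smul, smul_assoc, Rat.cast_smul_eq_qsmul]⟩
  · refine inf_le_inf_right _ fun x hx => (span_le (p := (ℂ ∙ u).restrictScalars ℚ)).2 ?_ hx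
    exact Set.insert_subset_iff.2 ⟨mem_span_singleton_self u,
      Set.singleton_subset_iff.2 (smul_mem _ τ (mem_span_singleton_self u))⟩

theorem finrank_span_pair_smul {τ : ℂ} (hτ : τ.im ≠ 0) {u : ℂ × ℂ} (hu : u ≠ 0) :
    finrank ℚ (span ℚ {u, τ • u}) = 2 := by
  have hli : LinearIndependent ℚ ![u, τ • u] := by
    refine LinearIndependent.pair_iff.2 fun s t hst => ?_
    have h : ((s : ℂ) + t * τ) • u = 0 := by
      rw [add_smul, mul_smul]
      simpa [← Rat.cast_smul_eq_qsmul ℂ] using hst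
    have hst' := (smul_eq_zero.1 h).resolve_right hu
    have ht : t = 0 := by simpa [hτ] using congrArg Complex.im hst'
    have hs : s = 0 := by simpa [ht] using congrArg Complex.re hst'
    exact ⟨hs, ht⟩
  rw [← Matrix.range_cons_cons_empty u (τ • u) ![], finrank_span_eq_card hli, Fintype.card_fin]

theorem exists_mul_apply_eq_int_add_int_mul {E : Type*} [AddCommGroup E] [Module ℂ E] {u : E}
    (hu : u ≠ 0) (τ : ℂ) {S : Set E} {d : ℕ} (hd : d ≠ 0)
    (hS : ∀ x ∈ S, x ∈ ℂ ∙ u → d • x ∈ span ℤ {u, τ • u}) (φ : (ℂ ∙ u) ≃ₗ[ℂ] ℂ) :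
    ∃ μ : ℂ, μ ≠ 0 ∧ ∀ v : ℂ ∙ u, (v : E) ∈ S → ∃ a b : ℤ, μ * φ v = a + b * τ := by
  set u' : ℂ ∙ u := ⟨u, mem_span_singleton_self u⟩
  have hφu : φ u' ≠ 0 := φ.map_ne_zero_iff.2 fun h => hu (congrArg Subtype.val h)
  refine ⟨d / φ u', div_ne_zero (Nat.cast_ne_zero.2 hd) hφu, fun v hv => ?_⟩
  obtain ⟨a, b, hab⟩ := mem_span_pair.1 (hS v hv v.2)
  have h : ((a : ℂ) + b * τ) • u' = (d : ℂ) • v := by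
    ext
    simpa [add_smul, mul_smul, Int.cast_smul_eq_zsmul, Nat.cast_smul_eq_nsmul] using hab
  have := congrArg φ h
  rw [map_smul, map_smul, smul_eq_mul, smul_eq_mul] at this
  refine ⟨a, b, ?_⟩
  field_simp
  linear_combination -this

theorem quadratic_field_splitting_general
    (n : ℕ) (hn : 0 < n) (τ : ℂ) (hτ : τ = Complex.I * Real.sqrt n)
    (Γ : AddSubgroup (ℂ × ℂ))
    (hΓk : ∀ γ ∈ Γ, γ.1 ∈ IntermediateField.adjoin ℚ ({τ} : Set ℂ) ∧
      γ.2 ∈ IntermediateField.adjoin ℚ ({τ} : Set ℂ))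
    (hfree : Nonempty (Module.Basis (Fin 3) ℤ Γ)) :
    ∃ (L : Submodule ℂ (ℂ × ℂ)) (γ₀ : ℂ × ℂ), Module.finrank ℂ L = 1 ∧ γ₀ ∈ Γ ∧
      Nonempty (Module.Basis (Fin 2) ℤ ((L.toAddSubgroup ⊓ Γ : AddSubgroup (ℂ × ℂ)))) ∧
      (∀ γ ∈ Γ, ∃! q : (L.toAddSubgroup ⊓ Γ : AddSubgroup (ℂ × ℂ)) × ℤ,
        (q.1 : ℂ × ℂ) + q.2 • γ₀ = γ) ∧
      (∀ φ : L ≃ₗ[ℂ] ℂ, ∃ μ : ℂ, μ ≠ 0 ∧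
        ∀ v : L, (v : ℂ × ℂ) ∈ Γ → ∃ a b : ℤ, μ * φ v = (a : ℂ) + (b : ℂ) * τ) := by
  obtain ⟨b⟩ := hfree
  have : Free ℤ Γ := .of_basis b
  have : Module.Finite ℤ Γ := .of_basis b
  have hτim : τ.im ≠ 0 := by simp [hτ, hn.ne']
  have hτ2 : τ * τ = algebraMap ℚ ℂ (-n) := by
    rw [hτ, mul_mul_mul_comm, Complex.I_mul_I, ← Complex.ofReal_mul,
      Real.mul_self_sqrt (Nat.cast_nonneg n)]
    simp
  have hK := IntermediateField.adjoin_le_span_pair hτ2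
  have : FiniteDimensional ℚ (span ℚ {1, τ}) := .span_of_finite ℚ (Set.toFinite _)
  have : FiniteDimensional ℚ ℚ⟮τ⟯ := finiteDimensional_of_le hK
  have hKrank : finrank ℚ ℚ⟮τ⟯ ≤ 2 :=
    (finrank_mono hK).trans ((finrank_span_le_card _).trans (by simpa using Finset.card_le_two))
  obtain ⟨u, hu0, huV, hτuV⟩ := exists_ne_zero_mem_span_rat_and_smul_mem
    (fun h => hτim (by simp [h])) (IntermediateField.mem_adjoin_simple_self ℚ τ) Γ hΓk
    (by rw [finrank_eq_card_basis b, Fintype.card_fin]; omega)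
  set P := span ℚ {u, τ • u}
  obtain ⟨bΛ⟩ := P.nonempty_basis_inf_of_le_span_rat Γ
    (span_le.2 (Set.insert_subset_iff.2 ⟨huV, Set.singleton_subset_iff.2 hτuV⟩))
  rw [finrank_span_pair_smul hτim hu0] at bΛ
  obtain ⟨γ₀, hγ₀, hsplit⟩ := AddSubgroup.exists_unique_add_zsmul_of_saturated inf_le_right
    (fun x hxΓ c hc hcx => ⟨P.mem_of_zsmul_mem hc hcx.1, hxΓ⟩)
    (by rw [finrank_eq_card_basis bΛ, finrank_eq_card_basis b]; simp)
  have : Module.Finite ℤ (P.toAddSubgroup ⊓ Γ).toIntSubmodule := .of_basis bΛ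
  obtain ⟨d, hd, hdΛ⟩ := (Module.Finite.iff_fg.1 this).exists_nsmul_mem_span_int fun x hx => hx.1
  have hLP := span_singleton_inf_eq_span_pair_inf (fun z hz => hK hz) hΓk hu0 huV
  refine ⟨ℂ ∙ u, γ₀, finrank_span_singleton hu0, hγ₀, ?_⟩
  rw [hLP]
  exact ⟨⟨bΛ⟩, hsplit, exists_mul_apply_eq_int_add_int_mul hu0 τ hd
    fun x hxΓ hxL => hdΛ x (hLP ▸ ⟨hxL, hxΓ⟩)⟩

/-- If `Γ ⊆ k²` is a discrete rank-3 subgroup of `ℂ²` with coordinates in the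
imaginary quadratic field `k = ℚ(τ)`, `τ = i√n`, then `Γ` splits as the direct sum of a
rank-2 lattice on a complex line `L` (defining an elliptic curve isogenous to
`ℂ/(ℤ + ℤτ)`) and an infinite cyclic group. -/
theorem quadratic_field_splitting
    (n : ℕ) (hn : 0 < n) (τ : ℂ) (hτ : τ = Complex.I * Real.sqrt n)
    (Γ : AddSubgroup (ℂ × ℂ))
    (hΓk : ∀ γ ∈ Γ, γ.1 ∈ IntermediateField.adjoin ℚ ({τ} : Set ℂ) ∧
      γ.2 ∈ IntermediateField.adjoin ℚ ({τ} : Set ℂ))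
    (hdisc : DiscreteTopology Γ)
    (hfree : Nonempty (Module.Basis (Fin 3) ℤ Γ)) :
    ∃ (L : Submodule ℂ (ℂ × ℂ)) (γ₀ : ℂ × ℂ), Module.finrank ℂ L = 1 ∧ γ₀ ∈ Γ ∧
      Nonempty (Module.Basis (Fin 2) ℤ ((L.toAddSubgroup ⊓ Γ : AddSubgroup (ℂ × ℂ)))) ∧
      (∀ γ ∈ Γ, ∃! q : (L.toAddSubgroup ⊓ Γ : AddSubgroup (ℂ × ℂ)) × ℤ,
        (q.1 : ℂ × ℂ) + q.2 • γ₀ = γ) ∧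
      (∀ φ : L ≃ₗ[ℂ] ℂ, ∃ μ : ℂ, μ ≠ 0 ∧
        ∀ v : L, (v : ℂ × ℂ) ∈ Γ → ∃ a b : ℤ, μ * φ v = (a : ℂ) + (b : ℂ) * τ) :=
  quadratic_field_splitting_general n hn τ hτ Γ hΓk hfree
end

section
/- Let k ⊆ ℂ be a cubic number field, i.e. a subfield of ℂ with [k : ℚ] = 3. Then for all x, y ∈ k \ ℚ there exist a, b, c, d ∈ ℚ with a·d − b·c ≠ 0, c·x + d ≠ 0, and y = (a·x + b)/(c·x + d). Moreover, for any x ∈ k \ ℚ and any a, b, c, d ∈ ℚ with a·d − b·c ≠ 0, one has c·x + d ≠ 0 and (a·x + b)/(c·x + d) ∈ k \ ℚ. (Thus GL₂(ℚ) acting by fractional linear transformations has exactly two orbits in ℙ¹(k): the set ℙ¹(ℚ) and its complement.) -/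
/-!
A rational Möbius transformation with nonzero determinant cannot send an irrational `x` to a
rational number, since `q = (a x + b)/(c x + d)` is a rational linear relation between `1` and `x`.
Conversely, for irrational `x, y` in a cubic field the four elements `1, x, y, x y` are rationally
dependent; a relation `a x + b = (c x + d) y` is exactly a Möbius transformation sending `x` to `y`,
and its determinant is nonzero because otherwise `y` would be rational.
-/

section RatCast

variable {K : Type*} [Field K] [CharZero K] {x : K}

theorem eq_zero_of_ratCast_mul_add_eq_zero (hx : ∀ q : ℚ, (q : K) ≠ x) {c d : ℚ}
    (h : (c : K) * x + d = 0) : c = 0 ∧ d = 0 := by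
  have hc : c = 0 := by
    by_contra hc
    apply hx (-d / c)
    have hcK : (c : K) ≠ 0 := by exact_mod_cast hc
    push_cast
    field_simp
    linear_combination -h
  subst hc
  exact ⟨rfl, by simpa using h⟩

theorem ratCast_mul_add_ne_zero_of_det_ne_zero (hx : ∀ q : ℚ, (q : K) ≠ x) {a b c d : ℚ}
    (hdet : a * d - b * c ≠ 0) : (c : K) * x + d ≠ 0 := fun h => by
  obtain ⟨rfl, rfl⟩ := eq_zero_of_ratCast_mul_add_eq_zero hx h
  simp at hdet

theorem ratCast_ne_moebius_of_det_ne_zero (hx : ∀ q : ℚ, (q : K) ≠ x) {a b c d : ℚ}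
    (hdet : a * d - b * c ≠ 0) (q : ℚ) : (q : K) ≠ (a * x + b) / (c * x + d) := by
  intro hq
  have hcd := ratCast_mul_add_ne_zero_of_det_ne_zero hx hdet
  rw [eq_div_iff hcd] at hq
  have hrel : ((a - q * c : ℚ) : K) * x + ((b - q * d : ℚ) : K) = 0 := by
    push_cast
    linear_combination -hq
  obtain ⟨ha, hb⟩ := eq_zero_of_ratCast_mul_add_eq_zero hx hrel
  apply hdet
  rw [sub_eq_zero.mp ha, sub_eq_zero.mp hb]
  ring

theorem det_ne_zero_of_mul_add_eq_mul_add_mul {y : K} (hx : ∀ q : ℚ, (q : K) ≠ x)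
    (hy : ∀ q : ℚ, (q : K) ≠ y) {a b c d : ℚ} (hne : ¬(a = 0 ∧ b = 0 ∧ c = 0 ∧ d = 0))
    (hrel : (a : K) * x + b = (c * x + d) * y) : (c : K) * x + d ≠ 0 ∧ a * d - b * c ≠ 0 := by
  have hcd : (c : K) * x + d ≠ 0 := by
    intro h0
    obtain ⟨hc, hd⟩ := eq_zero_of_ratCast_mul_add_eq_zero hx h0
    obtain ⟨ha, hb⟩ := eq_zero_of_ratCast_mul_add_eq_zero hx (by rw [hrel, h0, zero_mul])
    exact hne ⟨ha, hb, hc, hd⟩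
  refine ⟨hcd, fun hdet => ?_⟩
  have hdetK : (a : K) * d - b * c = 0 := by exact_mod_cast hdet
  -- a vanishing determinant makes `(a, b)` proportional to `(c, d)`, with factor `y`
  have hcy : (c : K) * y = a :=
    mul_right_cancel₀ hcd (by linear_combination -(c : K) * hrel - hdetK)
  have hdy : (d : K) * y = b :=
    mul_right_cancel₀ hcd (by linear_combination -(d : K) * hrel + x * hdetK)
  by_cases hc : c = 0
  · have hd : (d : K) ≠ 0 := fun hd => hcd (by simp [hc, hd])
    exact hy (b / d) (by push_cast; rw [div_eq_iff hd, ← hdy, mul_comm])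
  · have hcK : (c : K) ≠ 0 := by exact_mod_cast hc
    exact hy (a / c) (by push_cast; rw [div_eq_iff hcK, ← hcy, mul_comm])

theorem Subfield.exists_mul_add_eq_mul_add_mul (k : Subfield K) [FiniteDimensional ℚ k]
    (hk : Module.finrank ℚ k ≤ 3) {x y : K} (hx : x ∈ k) (hy : y ∈ k) :
    ∃ a b c d : ℚ, ¬(a = 0 ∧ b = 0 ∧ c = 0 ∧ d = 0) ∧ (a : K) * x + b = (c * x + d) * y := by
  have hdep : ¬LinearIndependent ℚ ![(1 : k), ⟨x, hx⟩, ⟨y, hy⟩, ⟨x, hx⟩ * ⟨y, hy⟩] := fun h => by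
    have := h.fintype_card_le_finrank
    simp only [Fintype.card_fin] at this
    omega
  obtain ⟨g, hg, i, hgi⟩ := Fintype.not_linearIndependent_iff.mp hdep
  refine ⟨g 1, g 0, -g 3, -g 2, fun h => hgi ?_, ?_⟩
  · obtain ⟨h1, h0, h3, h2⟩ := h
    fin_cases i <;> simp_all
  · have hgK := congrArg ((↑) : k → K) hg
    simp only [Fin.sum_univ_four, Rat.smul_def, MulMemClass.mk_mul_mk, Matrix.cons_val, mul_one,
      Subfield.coe_add, Subfield.coe_mul, SubfieldClass.coe_ratCast, ZeroMemClass.coe_zero] at hgK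
    push_cast
    linear_combination hgK

end RatCast

/-- For a cubic number field `k ⊆ ℂ`, the group `GL₂(ℚ)` acting by fractional
linear transformations acts transitively on `ℙ¹(k) \ ℙ¹(ℚ)` and preserves it, so it has
exactly two orbits in `ℙ¹(k)`: `ℙ¹(ℚ)` and its complement. -/
theorem cubic_field_two_orbits
    (k : Subfield ℂ) (hk : Module.finrank ℚ k = 3) :
    (∀ x y : ℂ, x ∈ k → (∀ q : ℚ, (q : ℂ) ≠ x) → y ∈ k → (∀ q : ℚ, (q : ℂ) ≠ y) →
      ∃ a b c d : ℚ, a * d - b * c ≠ 0 ∧ (c : ℂ) * x + (d : ℂ) ≠ 0 ∧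
        y = ((a : ℂ) * x + (b : ℂ)) / ((c : ℂ) * x + (d : ℂ))) ∧
    (∀ x : ℂ, x ∈ k → (∀ q : ℚ, (q : ℂ) ≠ x) → ∀ a b c d : ℚ, a * d - b * c ≠ 0 →
      (c : ℂ) * x + (d : ℂ) ≠ 0 ∧
      ((a : ℂ) * x + (b : ℂ)) / ((c : ℂ) * x + (d : ℂ)) ∈ k ∧
      (∀ q : ℚ, (q : ℂ) ≠ ((a : ℂ) * x + (b : ℂ)) / ((c : ℂ) * x + (d : ℂ)))) := by
  have : FiniteDimensional ℚ k := .of_finrank_pos (by omega)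
  refine ⟨fun x y hx hxq hy hyq => ?_, fun x hx hxq a b c d hdet => ?_⟩
  · obtain ⟨a, b, c, d, hne, hrel⟩ := k.exists_mul_add_eq_mul_add_mul hk.le hx hy
    obtain ⟨hcd, hdet⟩ := det_ne_zero_of_mul_add_eq_mul_add_mul hxq hyq hne hrel
    exact ⟨a, b, c, d, hdet, hcd, by rw [eq_div_iff hcd, hrel, mul_comm]⟩
  · have hmem (r s : ℚ) : (r : ℂ) * x + s ∈ k :=
      add_mem (mul_mem (SubfieldClass.ratCast_mem k r) hx) (SubfieldClass.ratCast_mem k s)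
    exact ⟨ratCast_mul_add_ne_zero_of_det_ne_zero hxq hdet, div_mem (hmem a b) (hmem c d),
      ratCast_ne_moebius_of_det_ne_zero hxq hdet⟩
end

section
/- Let k ⊆ ℂ be a cubic number field ([k : ℚ] = 3), and let Λ₁, Λ₂ ⊆ k be lattices in ℂ (discrete additive subgroups of ℂ that are free of rank 2). Then there exists μ ∈ ℂ, μ ≠ 0, such that μ·Λ₁ ⊆ Λ₂; that is, the elliptic curves ℂ/Λ₁ and ℂ/Λ₂ are isogenous. -/
/-!
Inside `k`, the `ℚ`-spans `V₁`, `V₂` of the two lattices are planes in a space of dimension 3.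
The `ℚ`-linear map `μ ↦ (v ↦ μ v mod V₂)` from `k` to `Hom(V₁, k ⧸ V₂)`, a space of dimension
`2 · 1 < 3`, therefore has a nonzero element `μ` in its kernel, i.e. `μ V₁ ⊆ V₂`. As `Λ₁` is
finitely generated, a nonzero integer multiple of `μ` clears the denominators and maps `Λ₁`
into `Λ₂`.
-/

open Module Submodule

section RatSpan

variable {E : Type*} [AddCommGroup E] [Module ℚ E]

theorem AddSubgroup.exists_nsmul_mem_of_mem_span_rat {Λ : AddSubgroup E} {x : E}
    (hx : x ∈ span ℚ (Λ : Set E)) : ∃ n : ℕ, n ≠ 0 ∧ n • x ∈ Λ := by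
  induction hx using span_induction with
  | mem x hx => exact ⟨1, one_ne_zero, by simpa using hx⟩
  | zero => exact ⟨1, one_ne_zero, by simp⟩
  | add x y _ _ hx hy =>
    obtain ⟨m, hm, hmx⟩ := hx
    obtain ⟨n, hn, hny⟩ := hy
    refine ⟨m * n, mul_ne_zero hm hn, ?_⟩
    rw [show (m * n) • (x + y) = n • m • x + m • n • y by module]
    exact Λ.add_mem (Λ.nsmul_mem hmx n) (Λ.nsmul_mem hny m)
  | smul q x _ hx =>
    obtain ⟨n, hn, hnx⟩ := hx
    refine ⟨q.den * n, mul_ne_zero q.den_ne_zero hn, ?_⟩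
    have hq : (q.den * n) • q • x = q.num • n • x := by
      rw [← Nat.cast_smul_eq_nsmul ℚ, ← Int.cast_smul_eq_zsmul ℚ, ← Nat.cast_smul_eq_nsmul ℚ n,
        smul_smul, smul_smul, ← Rat.mul_den_eq_num]
      congr 1
      push_cast
      ring
    rw [hq]
    exact Λ.zsmul_mem hnx _

theorem AddMonoidHom.exists_nsmul_mem_of_forall_mem_span_rat {M : Type*} [AddCommGroup M]
    [Module.Finite ℤ M] {Λ : AddSubgroup E} (f : M →+ E)
    (hf : ∀ m, f m ∈ span ℚ (Λ : Set E)) : ∃ n : ℕ, n ≠ 0 ∧ ∀ m, n • f m ∈ Λ := by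
  obtain ⟨s, hs⟩ := Module.Finite.fg_top (R := ℤ) (M := M)
  choose n hn0 hn using fun m : s => AddSubgroup.exists_nsmul_mem_of_mem_span_rat (hf m)
  have hgen : span ℤ (s : Set M) ≤
      (Λ.comap ((nsmulAddMonoidHom (∏ m, n m)).comp f)).toIntSubmodule := by
    refine span_le.2 fun m hm => ?_
    obtain ⟨c, hc⟩ := Finset.dvd_prod_of_mem n (Finset.mem_univ ⟨m, hm⟩)
    change (∏ m, n m) • f m ∈ Λ
    rw [hc, mul_nsmul]
    exact Λ.nsmul_mem (hn ⟨m, hm⟩) c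
  exact ⟨∏ m, n m, Finset.prod_ne_zero_iff.2 fun m _ => hn0 m, fun m => hgen (hs ▸ mem_top)⟩

theorem AddSubgroup.finrank_span_rat_eq_card {Λ : AddSubgroup E} {ι : Type*} [Fintype ι]
    (b : Basis ι ℤ Λ) : finrank ℚ (span ℚ (Λ : Set E)) = Fintype.card ι := by
  have hΛ : (span ℤ (Set.range fun i => (b i : E)) : Set E) = Λ := by
    change ((span ℤ (Set.range (Λ.subtype.toIntLinearMap ∘ b))) : Set E) = Λ
    rw [Set.range_comp, ← map_span, b.span_eq, Submodule.map_top]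
    ext
    simp
  have hli : LinearIndependent ℚ fun i => (b i : E) :=
    (LinearIndependent.iff_fractionRing ℤ ℚ).1 <|
      b.linearIndependent.map' Λ.subtype.toIntLinearMap
        (LinearMap.ker_eq_bot.2 Subtype.val_injective)
  rw [← hΛ, span_span_of_tower, finrank_span_eq_card hli]

end RatSpan

theorem Submodule.exists_ne_zero_forall_mul_mem {F K : Type*} [Field F] [Ring K] [Algebra F K]
    [FiniteDimensional F K] (V₁ V₂ : Submodule F K)
    (h : finrank F V₁ * finrank F (K ⧸ V₂) < finrank F K) :
    ∃ μ : K, μ ≠ 0 ∧ ∀ v ∈ V₁, μ * v ∈ V₂ := by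
  let L : K →ₗ[F] V₁ →ₗ[F] K ⧸ V₂ := ((LinearMap.mul F K).compl₂ V₁.subtype).compr₂ V₂.mkQ
  have hker : LinearMap.ker L ≠ ⊥ :=
    LinearMap.ker_ne_bot_of_finrank_lt (by rwa [finrank_linearMap])
  obtain ⟨μ, hμ, hμ0⟩ := (Submodule.ne_bot_iff _).1 hker
  refine ⟨μ, hμ0, fun v hv => ?_⟩
  simpa [L, Submodule.Quotient.mk_eq_zero] using
    LinearMap.congr_fun (LinearMap.mem_ker.1 hμ) ⟨v, hv⟩

theorem AddSubgroup.exists_ne_zero_forall_mul_mem {K : Type*} [Ring K] [Algebra ℚ K]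
    {ι₁ ι₂ : Type*} [Fintype ι₁] [Fintype ι₂] {Λ₁ Λ₂ : AddSubgroup K}
    (b₁ : Basis ι₁ ℤ Λ₁) (b₂ : Basis ι₂ ℤ Λ₂)
    (h : Fintype.card ι₁ * (finrank ℚ K - Fintype.card ι₂) < finrank ℚ K) :
    ∃ μ : K, μ ≠ 0 ∧ ∀ x ∈ Λ₁, μ * x ∈ Λ₂ := by
  have : FiniteDimensional ℚ K := Module.finite_of_finrank_pos (by omega)
  have : Module.Finite ℤ Λ₁ := Module.Finite.of_basis b₁
  obtain ⟨μ, hμ0, hμ⟩ := Submodule.exists_ne_zero_forall_mul_mem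
    (span ℚ (Λ₁ : Set K)) (span ℚ (Λ₂ : Set K))
    (by rwa [finrank_quotient, finrank_span_rat_eq_card b₁, finrank_span_rat_eq_card b₂])
  obtain ⟨n, hn0, hn⟩ :=
    ((AddMonoidHom.mulLeft μ).comp Λ₁.subtype).exists_nsmul_mem_of_forall_mem_span_rat
      fun x => hμ _ (subset_span x.2)
  refine ⟨(n : ℚ) • μ, smul_ne_zero (Nat.cast_ne_zero.2 hn0) hμ0, fun x hx => ?_⟩
  rw [smul_mul_assoc, Nat.cast_smul_eq_nsmul]
  exact hn ⟨x, hx⟩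

theorem cubic_field_lattices_isogenous_general
    (k : Subfield ℂ) (hk : Module.finrank ℚ k = 3)
    (Λ₁ Λ₂ : AddSubgroup ℂ)
    (h1k : (Λ₁ : Set ℂ) ⊆ (k : Set ℂ)) (h2k : (Λ₂ : Set ℂ) ⊆ (k : Set ℂ))
    (h1f : Nonempty (Module.Basis (Fin 2) ℤ Λ₁))
    (h2f : Nonempty (Module.Basis (Fin 2) ℤ Λ₂)) :
    ∃ μ : ℂ, μ ≠ 0 ∧ ∀ x ∈ Λ₁, μ * x ∈ Λ₂ := by
  obtain ⟨b₁⟩ := h1f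
  obtain ⟨b₂⟩ := h2f
  obtain ⟨μ, hμ0, hμ⟩ := AddSubgroup.exists_ne_zero_forall_mul_mem (K := k)
    (b₁.map (Λ₁.addSubgroupOfEquivOfLe (K := k.toAddSubgroup) h1k).symm.toIntLinearEquiv)
    (b₂.map (Λ₂.addSubgroupOfEquivOfLe (K := k.toAddSubgroup) h2k).symm.toIntLinearEquiv)
    (by simp [hk])
  exact ⟨μ, by simpa using hμ0, fun x hx => hμ ⟨x, h1k hx⟩ hx⟩

/-- Two lattices in `ℂ` both contained in a cubic number field `k ⊆ ℂ`
define isogenous elliptic curves: some nonzero `μ ∈ ℂ` satisfies `μ·Λ₁ ⊆ Λ₂`. -/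
theorem cubic_field_lattices_isogenous
    (k : Subfield ℂ) (hk : Module.finrank ℚ k = 3)
    (Λ₁ Λ₂ : AddSubgroup ℂ)
    (h1k : (Λ₁ : Set ℂ) ⊆ (k : Set ℂ)) (h2k : (Λ₂ : Set ℂ) ⊆ (k : Set ℂ))
    (h1d : DiscreteTopology Λ₁) (h1f : Nonempty (Module.Basis (Fin 2) ℤ Λ₁))
    (h2d : DiscreteTopology Λ₂) (h2f : Nonempty (Module.Basis (Fin 2) ℤ Λ₂)) :
    ∃ μ : ℂ, μ ≠ 0 ∧ ∀ x ∈ Λ₁, μ * x ∈ Λ₂ :=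
  cubic_field_lattices_isogenous_general k hk Λ₁ Λ₂ h1k h2k h1f h2f
end

section
/- Let Γ ⊆ ℂ² be a discrete additive subgroup which is free of rank 3. Then there exist surjective ℂ-linear maps π₁, π₂ : ℂ² → ℂ such that π₁(Γ) and π₂(Γ) are lattices in ℂ and there is no μ ∈ ℂ, μ ≠ 0, with μ·π₁(Γ) = π₂(Γ). (That is, ℂ²/Γ always has two non-isomorphic quotient elliptic curves.) -/
/-!
Write `Γ = ℤx + ℤy + ℤz`. Discreteness makes `x, y, z` linearly independent over `ℝ`, and an
odd-dimensional real subspace is not complex, so we may assume `I • x ∉ span ℝ {x, y, z}`. The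
projection `wedge x` along `ℂx` then maps `Γ` onto the lattice `ℤa + ℤb`, where `a = wedge x y`
and `b = wedge x z`, and the projection `wedge (n • x - y)` maps it onto `ℤa + ℤ(n b - c)`,
where `c = wedge y z`. The ratio `covol Λ / λ(Λ)²`, with `λ(Λ)` the length of a shortest nonzero
vector, is invariant under homothety. Since `covol (ℤu + ℤv) = |Im (conj u * v)|`, this ratio is
at least `|Im (conj a * (n b - c))| / ‖a‖²` for the second lattice, which grows linearly in `n`,
and at most `max ‖a‖ ‖b‖ ^ 2 / |Im (conj a * b)|` for the first.
-/

open Complex ComplexConjugate Submodule Module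

theorem smul_eq_re_smul_add_im_smul_I_smul {E : Type*} [AddCommGroup E] [Module ℂ E] (c : ℂ)
    (x : E) : c • x = c.re • x + c.im • I • x := by
  conv_lhs => rw [← re_add_im c]
  rw [add_smul, mul_smul, Complex.coe_smul, Complex.coe_smul]

theorem linearIndependent_real_of_discreteTopology {E ι : Type*} [NormedAddCommGroup E]
    [NormedSpace ℝ E] [FiniteDimensional ℝ E] [Fintype ι] {δ : ι → E}
    (hδ : LinearIndependent ℤ δ) (hd : DiscreteTopology (span ℤ (Set.range δ))) :
    LinearIndependent ℝ δ := by
  rw [linearIndependent_iff_card_eq_finrank_span, Real.finrank_eq_int_finrank_of_discrete hd,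
    ← linearIndependent_iff_card_eq_finrank_span]
  exact hδ

theorem exists_I_smul_notMem_span {E ι : Type*} [AddCommGroup E] [Module ℂ E] [Fintype ι]
    {δ : ι → E} (hδ : LinearIndependent ℝ δ) (hodd : Odd (Fintype.card ι)) :
    ∃ j, I • δ j ∉ span ℝ (Set.range δ) := by
  by_contra! h
  have hspan : (span ℂ (Set.range δ)).restrictScalars ℝ = span ℝ (Set.range δ) := by
    refine le_antisymm ?_ (span_le_restrictScalars ℝ ℂ _)
    rw [← span_smul_of_span_eq_top Complex.basisOneI.span_eq, span_le]
    rintro _ ⟨c, hc, _, ⟨j, rfl⟩, rfl⟩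
    simp only [Complex.coe_basisOneI, Matrix.range_cons, Matrix.range_empty, Set.union_empty,
      Set.union_singleton, Set.mem_insert_iff, Set.mem_singleton_iff] at hc
    rcases hc with rfl | rfl
    exacts [h j, by simpa using subset_span (Set.mem_range_self j)]
  have h2 : finrank ℝ ((span ℂ (Set.range δ)).restrictScalars ℝ) =
      2 * finrank ℂ (span ℂ (Set.range δ)) := finrank_real_of_complex _
  rw [hspan, finrank_span_eq_card hδ] at h2
  exact Nat.not_even_iff_odd.mpr hodd (h2 ▸ even_two_mul _)

theorem AddSubgroup.toIntSubmodule_eq_span_range_basis {E ι : Type*} [AddCommGroup E]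
    (Γ : AddSubgroup E) (b : Basis ι ℤ Γ) :
    Γ.toIntSubmodule = span ℤ (Set.range (fun i => (b i : E))) := by
  rw [Set.range_comp' (fun x : Γ => (x : E)),
    show (fun x : Γ => (x : E)) = Γ.subtype.toIntLinearMap from rfl, span_image, b.span_eq,
    Submodule.map_top]
  ext x
  simp

theorem AddSubgroup.coe_map_eq_span_pair {E F : Type*} [AddCommGroup E] [AddCommGroup F]
    {Γ : AddSubgroup E} {x y z : E} (hΓ : Γ.toIntSubmodule = span ℤ {x, y, z}) (π : E →+ F)
    (hx : π x ∈ span ℤ {π y, π z}) : (Γ.map π : Set F) = span ℤ {π y, π z} := by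
  rw [AddSubgroup.coe_map, show (Γ : Set E) = Γ.toIntSubmodule from rfl, hΓ,
    show ⇑π = π.toIntLinearMap from rfl, ← Submodule.map_coe, Submodule.map_span,
    Set.image_insert_eq, Set.image_pair]
  exact congrArg _ (span_insert_eq_span hx)

theorem exists_generators_I_smul_notMem_span (Γ : AddSubgroup (ℂ × ℂ)) [DiscreteTopology Γ]
    (b : Basis (Fin 3) ℤ Γ) :
    ∃ x y z : ℂ × ℂ, Γ.toIntSubmodule = span ℤ {x, y, z} ∧ LinearIndependent ℝ ![x, y, z] ∧
      I • x ∉ span ℝ {x, y, z} := by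
  set δ : Fin 3 → ℂ × ℂ := fun i => b i
  have hspan : Γ.toIntSubmodule = span ℤ (Set.range δ) :=
    Γ.toIntSubmodule_eq_span_range_basis b
  have hind : LinearIndependent ℝ δ := by
    refine linearIndependent_real_of_discreteTopology ?_
      (hspan ▸ (‹DiscreteTopology Γ› : DiscreteTopology Γ.toIntSubmodule))
    exact b.linearIndependent.map' Γ.subtype.toIntLinearMap
      (LinearMap.ker_eq_bot.mpr Subtype.val_injective)
  obtain ⟨j, hj⟩ := exists_I_smul_notMem_span hind (by decide)
  set σ := Equiv.swap 0 j
  have hvec : ![δ j, δ (σ 1), δ (σ 2)] = δ ∘ σ := by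
    ext1 i
    fin_cases i <;> simp [σ]
  have hrange : ({δ j, δ (σ 1), δ (σ 2)} : Set (ℂ × ℂ)) = Set.range δ := by
    rw [← σ.surjective.range_comp, ← hvec]
    simp only [Matrix.range_cons, Matrix.range_empty, Set.union_empty, Set.singleton_union]
  refine ⟨δ j, δ (σ 1), δ (σ 2), ?_⟩
  rw [hrange, hvec]
  exact ⟨hspan, hind.comp σ σ.injective, hj⟩

def wedge : (ℂ × ℂ) →ₗ[ℂ] (ℂ × ℂ) →ₗ[ℂ] ℂ :=
  LinearMap.mk₂ ℂ (fun v z => v.1 * z.2 - v.2 * z.1) (by intros; simp; ring)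
    (by intros; simp; ring) (by intros; simp; ring) (by intros; simp; ring)

theorem wedge_apply (v z : ℂ × ℂ) : wedge v z = v.1 * z.2 - v.2 * z.1 := rfl

theorem wedge_self (v : ℂ × ℂ) : wedge v v = 0 := by simp [wedge_apply, mul_comm]

theorem wedge_swap (v z : ℂ × ℂ) : wedge z v = -wedge v z := by simp only [wedge_apply]; ring

theorem exists_eq_smul_of_wedge_eq_zero {v z : ℂ × ℂ} (hv : v ≠ 0) (h : wedge v z = 0) :
    ∃ c : ℂ, z = c • v := by
  rw [wedge_apply, sub_eq_zero] at h
  rcases eq_or_ne v.1 0 with h1 | h1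
  · have h2 : v.2 ≠ 0 := fun h2 => hv (Prod.ext h1 h2)
    refine ⟨z.2 / v.2, Prod.ext ?_ ?_⟩
    · simpa [h1, h2] using h.symm
    · simp [h2]
  · refine ⟨z.1 / v.1, Prod.ext ?_ ?_⟩
    · simp [h1]
    · rw [Prod.smul_snd, smul_eq_mul, div_mul_eq_mul_div, eq_div_iff h1]
      linear_combination h

theorem linearIndependent_wedge {x y z : ℂ × ℂ} (hind : LinearIndependent ℝ ![x, y, z])
    (hI : I • x ∉ span ℝ {x, y, z}) : LinearIndependent ℝ ![wedge x y, wedge x z] := by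
  rw [LinearIndependent.pair_iff]
  intro s t hst
  have hx : x ≠ 0 := by simpa using hind.ne_zero 0
  obtain ⟨c, hc⟩ := exists_eq_smul_of_wedge_eq_zero hx (z := s • y + t • z) (by
    simpa only [map_add, LinearMap.map_smul_of_tower] using hst)
  rw [smul_eq_re_smul_add_im_smul_I_smul] at hc
  have him : c.im = 0 := by
    by_contra him
    refine hI ?_
    rw [← inv_smul_smul₀ him (I • x), eq_sub_of_add_eq' hc.symm]
    refine smul_mem _ _ (sub_mem (add_mem ?_ ?_) ?_) <;>
      exact smul_mem _ _ (subset_span (by simp))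
  rw [him, zero_smul, add_zero] at hc
  have := Fintype.linearIndependent_iff.mp hind ![-c.re, s, t] (by
    simp [Fin.sum_univ_three, add_assoc, hc])
  exact ⟨this 1, this 2⟩

theorem coe_map_wedge_eq_span_pair {Γ : AddSubgroup (ℂ × ℂ)} {x y z : ℂ × ℂ}
    (hΓ : Γ.toIntSubmodule = span ℤ {x, y, z}) :
    (Γ.map (wedge x).toAddMonoidHom : Set ℂ) = span ℤ {wedge x y, wedge x z} :=
  AddSubgroup.coe_map_eq_span_pair hΓ _ (by simp [wedge_self])

theorem coe_map_wedge_natCast_smul_sub_eq_span_pair {Γ : AddSubgroup (ℂ × ℂ)} {x y z : ℂ × ℂ}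
    (hΓ : Γ.toIntSubmodule = span ℤ {x, y, z}) (n : ℕ) :
    (Γ.map (wedge ((n : ℂ) • x - y)).toAddMonoidHom : Set ℂ) =
      span ℤ {wedge x y, n * wedge x z - wedge y z} := by
  have hπ : ∀ w, wedge ((n : ℂ) • x - y) w = n * wedge x w - wedge y w := fun w => by
    simp only [map_sub, map_smul, LinearMap.sub_apply, LinearMap.smul_apply, smul_eq_mul]
  have hx : wedge ((n : ℂ) • x - y) x = wedge x y := by
    rw [hπ, wedge_self, wedge_swap x y]
    ring
  have hy : wedge ((n : ℂ) • x - y) y = n • wedge x y := by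
    rw [hπ, wedge_self, nsmul_eq_mul]
    ring
  have := AddSubgroup.coe_map_eq_span_pair (x := y) (y := x) (by rwa [Set.insert_comm])
    (wedge ((n : ℂ) • x - y)).toAddMonoidHom (by
      simp only [LinearMap.toAddMonoidHom_coe, hx, hy]
      exact nsmul_mem (subset_span (by simp)) n)
  rwa [LinearMap.toAddMonoidHom_coe, hx, hπ z] at this

section PlaneLattice

variable {u v w : ℂ}

theorem im_conj_mul_smul_add_smul (u v : ℂ) (s t : ℝ) :
    (conj u * (s • u + t • v)).im = t * (conj u * v).im := by
  simp only [real_smul, mul_add, add_im, mul_im, mul_re, conj_re, conj_im, ofReal_re, ofReal_im]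
  ring

theorem im_conj_mul_swap (u v : ℂ) : (conj v * u).im = -(conj u * v).im := by
  simp only [mul_im, conj_re, conj_im]
  ring

theorem abs_im_conj_mul_le (u v : ℂ) : |(conj u * v).im| ≤ ‖u‖ * ‖v‖ := by
  simpa using abs_im_le_norm (conj u * v)

theorem im_conj_mul_mul (μ u v : ℂ) :
    (conj (μ * u) * (μ * v)).im = normSq μ * (conj u * v).im := by
  rw [map_mul, show conj μ * conj u * (μ * v) = (conj μ * μ) * (conj u * v) by ring,
    ← normSq_eq_conj_mul_self, im_ofReal_mul]

theorem linearIndependent_pair_iff_im_conj_mul_ne_zero :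
    LinearIndependent ℝ ![u, v] ↔ (conj u * v).im ≠ 0 := by
  rw [LinearIndependent.pair_iff]
  constructor
  · intro h h0
    have hu : u ≠ 0 := fun hu => one_ne_zero (h 1 0 (by simp [hu])).1
    have hreal : conj u * v = (conj u * v).re := ext rfl (by simpa using h0)
    refine (normSq_pos.mpr hu).ne' (neg_eq_zero.mp (h (conj u * v).re (-normSq u) ?_).2)
    rw [real_smul, real_smul, ← hreal, ofReal_neg, normSq_eq_conj_mul_self]
    ring
  · intro h s t hst
    have ht : t * (conj u * v).im = 0 := by
      rw [← im_conj_mul_smul_add_smul u v s, hst, mul_zero, zero_im]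
    have hs : s * (conj v * u).im = 0 := by
      rw [← im_conj_mul_smul_add_smul v u t, add_comm, hst, mul_zero, zero_im]
    rw [im_conj_mul_swap] at hs
    exact ⟨(mul_eq_zero.mp hs).resolve_right (neg_ne_zero.mpr h),
      (mul_eq_zero.mp ht).resolve_right h⟩

theorem abs_im_conj_mul_le_of_mem_span_pair (hw : w ∈ span ℤ {u, v})
    (h : (conj u * w).im ≠ 0) : |(conj u * v).im| ≤ ‖u‖ * ‖w‖ := by
  obtain ⟨a, b, rfl⟩ := mem_span_pair.mp hw
  rw [← Int.cast_smul_eq_zsmul ℝ a u, ← Int.cast_smul_eq_zsmul ℝ b v] at h ⊢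
  rw [im_conj_mul_smul_add_smul] at h
  have hb : (1 : ℝ) ≤ |(b : ℝ)| := by exact_mod_cast Int.one_le_abs (by rintro rfl; simp at h)
  calc |(conj u * v).im| ≤ |(b : ℝ)| * |(conj u * v).im| := le_mul_of_one_le_left (abs_nonneg _) hb
    _ = |(conj u * ((a : ℝ) • u + (b : ℝ) • v)).im| := by
      rw [im_conj_mul_smul_add_smul, abs_mul]
    _ ≤ ‖u‖ * ‖(a : ℝ) • u + (b : ℝ) • v‖ := abs_im_conj_mul_le _ _

theorem im_conj_mul_ne_zero_or_of_mem_span_pair (hw : w ∈ span ℤ {u, v}) (hw0 : w ≠ 0)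
    (huv : (conj u * v).im ≠ 0) : (conj u * w).im ≠ 0 ∨ (conj v * w).im ≠ 0 := by
  obtain ⟨a, b, rfl⟩ := mem_span_pair.mp hw
  rw [← Int.cast_smul_eq_zsmul ℝ a u, ← Int.cast_smul_eq_zsmul ℝ b v] at hw0 ⊢
  rw [im_conj_mul_smul_add_smul, add_comm, im_conj_mul_smul_add_smul, im_conj_mul_swap u v]
  by_contra! h
  have hb : (b : ℝ) = 0 := (mul_eq_zero.mp h.1).resolve_right huv
  have ha : (a : ℝ) = 0 := (mul_eq_zero.mp h.2).resolve_right (neg_ne_zero.mpr huv)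
  simp [ha, hb] at hw0

theorem abs_im_conj_mul_le_max_mul_norm (hw : w ∈ span ℤ {u, v}) (hw0 : w ≠ 0) :
    |(conj u * v).im| ≤ max ‖u‖ ‖v‖ * ‖w‖ := by
  by_cases huv : (conj u * v).im = 0
  · rw [huv, abs_zero]
    positivity
  rcases im_conj_mul_ne_zero_or_of_mem_span_pair hw hw0 huv with h | h
  · exact (abs_im_conj_mul_le_of_mem_span_pair hw h).trans (by gcongr; exact le_max_left _ _)
  · rw [Set.pair_comm] at hw
    have := abs_im_conj_mul_le_of_mem_span_pair hw h
    rw [im_conj_mul_swap, abs_neg] at this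
    exact this.trans (by gcongr; exact le_max_right _ _)

theorem not_exists_mul_image_span_pair_eq {u v u' v' : ℂ}
    (h : max ‖u‖ ‖v‖ ^ 2 * ‖u'‖ ^ 2 < |(conj u * v).im| * |(conj u' * v').im|) :
    ¬ ∃ μ : ℂ, μ ≠ 0 ∧ (fun x => μ * x) '' (span ℤ {u, v} : Set ℂ) = span ℤ {u', v'} := by
  rintro ⟨μ, hμ, hμΛ⟩
  set M := max ‖u‖ ‖v‖
  have huv : (conj u * v).im ≠ 0 :=
    abs_ne_zero.mp (left_ne_zero_of_mul (h.trans_le' (by positivity)).ne')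
  obtain ⟨w, hw, rfl⟩ : u' ∈ (fun x => μ * x) '' (span ℤ {u, v} : Set ℂ) :=
    hμΛ ▸ subset_span (by simp)
  have hw0 : w ≠ 0 := by
    rintro rfl
    simp at h
  obtain ⟨z, hz, hzM, hzw⟩ : ∃ z ∈ span ℤ {u, v}, ‖z‖ ≤ M ∧ (conj z * w).im ≠ 0 := by
    rcases im_conj_mul_ne_zero_or_of_mem_span_pair hw hw0 huv with h' | h'
    exacts [⟨u, subset_span (by simp), le_max_left _ _, h'⟩,
      ⟨v, subset_span (by simp), le_max_right _ _, h'⟩]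
  have hμz : μ * z ∈ span ℤ {μ * w, v'} := by
    rw [← SetLike.mem_coe, ← hμΛ]
    exact ⟨z, hz, rfl⟩
  have h' : |(conj (μ * w) * v').im| ≤ ‖μ * w‖ * (‖μ‖ * M) := by
    refine (abs_im_conj_mul_le_of_mem_span_pair hμz ?_).trans ?_
    · rw [← neg_ne_zero, ← im_conj_mul_swap, im_conj_mul_mul]
      exact mul_ne_zero (normSq_pos.mpr hμ).ne' hzw
    · rw [norm_mul μ z]
      gcongr
  have := mul_le_mul (abs_im_conj_mul_le_max_mul_norm hw hw0) h' (abs_nonneg _) (by positivity)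
  rw [norm_mul] at this h
  exact h.not_ge (this.trans_eq (by ring))

theorem discreteTopology_and_nonempty_basis_of_coe_eq_span_pair {S : AddSubgroup ℂ}
    (huv : LinearIndependent ℝ ![u, v]) (hS : (S : Set ℂ) = span ℤ {u, v}) :
    DiscreteTopology S ∧ Nonempty (Basis (Fin 2) ℤ S) := by
  let L : PeriodPair := ⟨u, v, huv⟩
  obtain rfl : S = L.lattice.toAddSubgroup := SetLike.coe_injective hS
  exact ⟨inferInstanceAs (DiscreteTopology L.lattice), ⟨L.latticeBasis⟩⟩

end PlaneLattice

theorem exists_nat_lt_abs_mul_sub (K p : ℝ) {q : ℝ} (hq : q ≠ 0) : ∃ n : ℕ, K < |n * q - p| := by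
  obtain ⟨n, hn⟩ := exists_nat_gt ((K + |p|) / |q|)
  refine ⟨n, ?_⟩
  rw [div_lt_iff₀ (abs_pos.mpr hq)] at hn
  have := abs_sub_abs_le_abs_sub (n * q) p
  rw [abs_mul, Nat.abs_cast] at this
  linarith

theorem exists_nat_max_sq_mul_sq_lt_abs_im_mul {a b : ℂ} (hab : (conj a * b).im ≠ 0) (c : ℂ) :
    ∃ n : ℕ, max ‖a‖ ‖b‖ ^ 2 * ‖a‖ ^ 2 < |(conj a * b).im| * |(conj a * (n * b - c)).im| := by
  obtain ⟨n, hn⟩ := exists_nat_lt_abs_mul_sub (max ‖a‖ ‖b‖ ^ 2 * ‖a‖ ^ 2 / |(conj a * b).im|)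
    (conj a * c).im hab
  refine ⟨n, ?_⟩
  rwa [mul_sub, sub_im, mul_left_comm, ← ofReal_natCast, im_ofReal_mul,
    ← div_lt_iff₀' (abs_pos.mpr hab)]

theorem surjective_and_discreteTopology_and_nonempty_basis_of_coe_map_eq_span_pair
    {Γ : AddSubgroup (ℂ × ℂ)} {π : (ℂ × ℂ) →ₗ[ℂ] ℂ} {u v : ℂ}
    (hΛ : (Γ.map π.toAddMonoidHom : Set ℂ) = span ℤ {u, v}) (huv : (conj u * v).im ≠ 0) :
    Function.Surjective π ∧ DiscreteTopology (Γ.map π.toAddMonoidHom) ∧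
      Nonempty (Basis (Fin 2) ℤ (Γ.map π.toAddMonoidHom)) := by
  refine ⟨LinearMap.surjective_of_ne_zero ?_, discreteTopology_and_nonempty_basis_of_coe_eq_span_pair
    (linearIndependent_pair_iff_im_conj_mul_ne_zero.mpr huv) hΛ⟩
  rintro rfl
  have hu : u ∈ (Γ.map (0 : (ℂ × ℂ) →ₗ[ℂ] ℂ).toAddMonoidHom : Set ℂ) := hΛ ▸ subset_span (by simp)
  obtain rfl : u = 0 := by simpa [eq_comm] using hu
  simp at huv

/-- Every semi-torus `ℂ²/Γ` with `Γ` discrete of rank 3 admits two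
non-isomorphic quotient elliptic curves. -/
theorem exists_nonisomorphic_quotients
    (Γ : AddSubgroup (ℂ × ℂ)) (hdisc : DiscreteTopology Γ)
    (hfree : Nonempty (Module.Basis (Fin 3) ℤ Γ)) :
    ∃ π₁ π₂ : (ℂ × ℂ) →ₗ[ℂ] ℂ, Function.Surjective π₁ ∧ Function.Surjective π₂ ∧
      DiscreteTopology (Γ.map π₁.toAddMonoidHom) ∧
      Nonempty (Module.Basis (Fin 2) ℤ (Γ.map π₁.toAddMonoidHom)) ∧
      DiscreteTopology (Γ.map π₂.toAddMonoidHom) ∧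
      Nonempty (Module.Basis (Fin 2) ℤ (Γ.map π₂.toAddMonoidHom)) ∧
      ¬ ∃ μ : ℂ, μ ≠ 0 ∧
        (fun x => μ * x) '' ((Γ.map π₁.toAddMonoidHom : AddSubgroup ℂ) : Set ℂ) =
          ((Γ.map π₂.toAddMonoidHom : AddSubgroup ℂ) : Set ℂ) := by
  obtain ⟨x, y, z, hΓ, hind, hI⟩ := exists_generators_I_smul_notMem_span Γ hfree.some
  have hab := linearIndependent_pair_iff_im_conj_mul_ne_zero.mp (linearIndependent_wedge hind hI)
  obtain ⟨n, hshape⟩ := exists_nat_max_sq_mul_sq_lt_abs_im_mul hab (wedge y z)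
  have hΛ₁ := coe_map_wedge_eq_span_pair hΓ
  have hΛ₂ := coe_map_wedge_natCast_smul_sub_eq_span_pair hΓ n
  obtain ⟨hs₁, hd₁, hb₁⟩ :=
    surjective_and_discreteTopology_and_nonempty_basis_of_coe_map_eq_span_pair hΛ₁ hab
  obtain ⟨hs₂, hd₂, hb₂⟩ :=
    surjective_and_discreteTopology_and_nonempty_basis_of_coe_map_eq_span_pair hΛ₂
      (abs_ne_zero.mp (right_ne_zero_of_mul (hshape.trans_le' (by positivity)).ne'))
  refine ⟨_, _, hs₁, hs₂, hd₁, hb₁, hd₂, hb₂, ?_⟩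
  rw [hΛ₁, hΛ₂]
  exact not_exists_mul_image_span_pair_eq hshape
end

section
/- Let Γ ⊆ ℂ² be a discrete additive subgroup which is free of rank 3. Let Γ_ℝ ⊆ ℂ² denote the ℝ-linear span of Γ and H = Γ_ℝ ∩ i·Γ_ℝ. Let γ ∈ Γ with γ ∉ H, and let π : ℂ² → ℂ be a surjective ℂ-linear map with kernel ℂ·γ. Then π(Γ) is a lattice in ℂ, i.e. a discrete additive subgroup of ℂ that is free of rank 2. -/
/-!
Because `I • γ ∉ Γ_ℝ`, the real subspace `Γ_ℝ` meets `ker π = ℂ γ` only in the line `ℝ γ`, and this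
line is spanned by the lattice vector `γ`. Hence `π` maps the 3-dimensional space `Γ_ℝ` onto `ℂ`,
while `Γ ∩ ker π` has rank 1, so by rank–nullity over `ℤ` the group `π(Γ)` has rank `3 - 1 = 2`.
A finitely generated subgroup of `ℂ` of rank 2 spanning `ℂ` over `ℝ` is the `ℤ`-span of a real
basis, hence discrete.
-/

open Module Submodule

namespace Submodule

theorem finrank_map_add_finrank_inf_ker {R M N : Type*} [CommRing R] [IsDomain R]
    [AddCommGroup M] [Module R M] [AddCommGroup N] [Module R N]
    (p : Submodule R M) [Module.Finite R p] (f : M →ₗ[R] N) :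
    finrank R (p.map f) + finrank R ↥(p ⊓ LinearMap.ker f) = finrank R p := by
  let g := f ∘ₗ p.subtype
  have hrange : LinearMap.range g = p.map f := by rw [LinearMap.range_comp, range_subtype]
  have hker : LinearMap.ker g = comap p.subtype (p ⊓ LinearMap.ker f) := by
    rw [LinearMap.ker_comp, comap_inf, comap_subtype_self, top_inf_eq]
  rw [← hrange, ← (comapSubtypeEquivOfLe inf_le_left).finrank_eq, ← hker,
    ← g.quotKerEquivRange.finrank_eq]
  exact (LinearMap.ker g).finrank_quotient_add_finrank

theorem inf_restrictScalars_span_singleton_eq {E : Type*} [AddCommGroup E] [Module ℂ E]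
    [Module ℝ E] [IsScalarTower ℝ ℂ E] {V : Submodule ℝ E} {γ : E} (hγ : γ ∈ V)
    (hIγ : Complex.I • γ ∉ V) :
    V ⊓ (ℂ ∙ γ).restrictScalars ℝ = ℝ ∙ γ := by
  refine le_antisymm ?_ (span_le.mpr ?_)
  · rintro x ⟨hxV, hx⟩
    obtain ⟨c, rfl⟩ := mem_span_singleton.mp hx
    have hc : c • γ = c.re • γ + c.im • Complex.I • γ := by
      rw [← algebraMap_smul ℂ c.re, ← algebraMap_smul ℂ c.im, smul_smul, ← add_smul]
      simp [Complex.re_add_im]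
    have him : c.im = 0 := by
      by_contra h
      refine hIγ ?_
      have : Complex.I • γ = c.im⁻¹ • (c • γ - c.re • γ) := by
        rw [hc, add_sub_cancel_left, inv_smul_smul₀ h]
      rw [this]
      exact V.smul_mem _ (V.sub_mem hxV (V.smul_mem _ hγ))
    rw [hc, him, zero_smul, add_zero]
    exact smul_mem _ _ (mem_span_singleton_self γ)
  · rw [Set.singleton_subset_iff]
    exact ⟨hγ, mem_span_singleton_self γ⟩

variable {E F : Type*} [NormedAddCommGroup E] [NormedSpace ℝ E] [NormedAddCommGroup F]
  [NormedSpace ℝ F] (L : Submodule ℤ E)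

theorem finrank_int_eq_finrank_real_span [FiniteDimensional ℝ E] [DiscreteTopology L] :
    finrank ℤ L = finrank ℝ (span ℝ (L : Set E)) := by
  have := Real.finrank_eq_int_finrank_of_discrete (s := (L : Set E)) (by rwa [span_eq])
  rw [Set.finrank, Set.finrank, span_eq] at this
  exact this.symm

theorem discreteTopology_of_span_eq_top_of_finrank_eq [Module.Finite ℤ L]
    (hspan : span ℝ (L : Set E) = ⊤) (hrank : finrank ℤ L = finrank ℝ E) :
    DiscreteTopology L := by
  have : IsAddTorsionFree E := .of_isTorsionFree ℝ E
  have : Module.Free ℤ L := Module.free_of_finite_type_torsion_free'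
  let b := Module.Free.chooseBasis ℤ L
  have hL : span ℤ (Set.range fun i ↦ (b i : E)) = L := by
    rw [Set.range_comp', ← L.coe_subtype, ← map_span, b.span_eq, map_top, range_subtype]
  have hb : ⊤ ≤ span ℝ (Set.range fun i ↦ (b i : E)) := by
    rw [← span_span_of_tower ℤ, hL, hspan]
  let B := basisOfTopLeSpanOfCardEqFinrank _ hb
    (by rw [← hrank, finrank_eq_card_chooseBasisIndex])
  have : L = span ℤ (Set.range B) := by
    rw [coe_basisOfTopLeSpanOfCardEqFinrank, hL]
  rw [this]
  infer_instance

variable [FiniteDimensional ℝ E] [DiscreteTopology L] (φ : E →ₗ[ℝ] F)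
  (hker : span ℝ ((L ⊓ LinearMap.ker (φ.restrictScalars ℤ) : Submodule ℤ E) : Set E) =
    span ℝ (L : Set E) ⊓ LinearMap.ker φ)
include hker

theorem finrank_map_eq_of_span_inf_ker_eq :
    finrank ℤ (L.map (φ.restrictScalars ℤ)) = finrank ℝ ((span ℝ (L : Set E)).map φ) := by
  have : DiscreteTopology ↥(L ⊓ LinearMap.ker (φ.restrictScalars ℤ)) :=
    DiscreteTopology.of_subset ‹_› inf_le_left
  have hint := finrank_map_add_finrank_inf_ker L (φ.restrictScalars ℤ)
  have hreal := finrank_map_add_finrank_inf_ker (span ℝ (L : Set E)) φ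
  rw [finrank_int_eq_finrank_real_span (L ⊓ _), hker, finrank_int_eq_finrank_real_span L] at hint
  omega

theorem discreteTopology_map_of_span_inf_ker_eq
    (hsurj : (span ℝ (L : Set E)).map φ = ⊤) :
    DiscreteTopology (L.map (φ.restrictScalars ℤ)) := by
  refine discreteTopology_of_span_eq_top_of_finrank_eq _ ?_ ?_
  · rw [map_coe, LinearMap.coe_restrictScalars, span_image, hsurj]
  · rw [finrank_map_eq_of_span_inf_ker_eq L φ hker, hsurj, finrank_top]

end Submodule

theorem quotient_is_lattice_general
    (Γ : AddSubgroup (ℂ × ℂ)) (hdisc : DiscreteTopology Γ)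
    (hfree : Nonempty (Module.Basis (Fin 3) ℤ Γ))
    (γ : ℂ × ℂ) (hγ : γ ∈ Γ)
    (hγH : ¬(γ ∈ Submodule.span ℝ (Γ : Set (ℂ × ℂ)) ∧
      Complex.I • γ ∈ Submodule.span ℝ (Γ : Set (ℂ × ℂ))))
    (π : (ℂ × ℂ) →ₗ[ℂ] ℂ)
    (hker : LinearMap.ker π = Submodule.span ℂ ({γ} : Set (ℂ × ℂ))) :
    DiscreteTopology (Γ.map π.toAddMonoidHom) ∧
      Nonempty (Module.Basis (Fin 2) ℤ (Γ.map π.toAddMonoidHom)) := by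
  let Γ' := Γ.toIntSubmodule
  have : DiscreteTopology Γ' := hdisc
  let φ := π.restrictScalars ℝ
  set V := span ℝ (Γ : Set (ℂ × ℂ))
  have hγV : γ ∈ V := subset_span hγ
  have hγ0 : γ ≠ 0 := by rintro rfl; simp at hγH
  have hVker : V ⊓ LinearMap.ker φ = ℝ ∙ γ := by
    rw [LinearMap.ker_restrictScalars, hker]
    exact inf_restrictScalars_span_singleton_eq hγV fun h ↦ hγH ⟨hγV, h⟩
  have hV : finrank ℝ V = 3 :=
    (finrank_int_eq_finrank_real_span Γ').symm.trans (finrank_eq_card_basis hfree.some)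
  have hφV : V.map φ = ⊤ := by
    refine eq_top_of_finrank_eq ?_
    have := finrank_map_add_finrank_inf_ker V φ
    rw [hVker, finrank_span_singleton hγ0, hV] at this
    rw [Complex.finrank_real_complex]
    omega
  have hΓker : span ℝ ((Γ' ⊓ LinearMap.ker (φ.restrictScalars ℤ) : Submodule ℤ (ℂ × ℂ)) :
      Set (ℂ × ℂ)) = V ⊓ LinearMap.ker φ := by
    refine le_antisymm (span_le.mpr fun x hx ↦ ⟨subset_span hx.1, hx.2⟩) ?_
    rw [hVker, span_singleton_le_iff_mem]
    refine subset_span ⟨hγ, show γ ∈ LinearMap.ker π from ?_⟩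
    exact hker ▸ mem_span_singleton_self γ
  have hrank := finrank_map_eq_of_span_inf_ker_eq Γ' φ hΓker
  rw [AddSubgroup.coe_toIntSubmodule, hφV, finrank_top, Complex.finrank_real_complex] at hrank
  exact ⟨discreteTopology_map_of_span_inf_ker_eq Γ' φ hΓker hφV,
    ⟨(finBasisOfFinrankEq ℤ _ hrank :)⟩⟩

/-- For `Γ ⊆ ℂ²` discrete of rank 3, `H = Γ_ℝ ∩ iΓ_ℝ`, and `γ ∈ Γ \ H`,
the image of `Γ` under a surjective `ℂ`-linear map `π : ℂ² → ℂ` with kernel `ℂγ` is a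
lattice in `ℂ` (discrete and free of rank 2). -/
theorem quotient_is_lattice
    (Γ : AddSubgroup (ℂ × ℂ)) (hdisc : DiscreteTopology Γ)
    (hfree : Nonempty (Module.Basis (Fin 3) ℤ Γ))
    (γ : ℂ × ℂ) (hγ : γ ∈ Γ)
    (hγH : ¬(γ ∈ Submodule.span ℝ (Γ : Set (ℂ × ℂ)) ∧
      Complex.I • γ ∈ Submodule.span ℝ (Γ : Set (ℂ × ℂ))))
    (π : (ℂ × ℂ) →ₗ[ℂ] ℂ) (hπ : Function.Surjective π)
    (hker : LinearMap.ker π = Submodule.span ℂ ({γ} : Set (ℂ × ℂ))) :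
    DiscreteTopology (Γ.map π.toAddMonoidHom) ∧
      Nonempty (Module.Basis (Fin 2) ℤ (Γ.map π.toAddMonoidHom)) :=
  quotient_is_lattice_general Γ hdisc hfree γ hγ hγH π hker
end

section
/- Let α, β ∈ ℂ with β ∉ ℚ + ℚ·α. Suppose there exist two distinct integers k ≠ n and rational numbers a_k, b_k, c_k, d_k and a_n, b_n, c_n, d_n with a_k·d_k − b_k·c_k ≠ 0, c_k·α + d_k ≠ 0, (a_k·α + b_k)/(c_k·α + d_k) = β + k·α, and a_n·d_n − b_n·c_n ≠ 0, c_n·α + d_n ≠ 0, (a_n·α + b_n)/(c_n·α + d_n) = β + n·α. Then α is algebraic over ℚ of degree at most 3, and β ∈ ℚ + ℚ·α + ℚ·α². -/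
/-!
Clearing denominators, `aₖα + bₖ = (β + kα)(cₖα + dₖ)` and likewise for `n`. Multiplying each
relation by the other denominator and subtracting eliminates `β` and leaves a rational cubic in `α`
with leading coefficient `(k - n) cₖ cₙ`, which is nonzero because `c = 0` would put `β` in
`ℚ + ℚα`. Hence `[ℚ(α) : ℚ] ≤ 3`, so `ℚ(α)` is spanned by `1, α, α²`, and `β` lies in `ℚ(α)`.
-/

open Polynomial IntermediateField

variable {E : Type*} [Field E] [CharZero E]

theorem denom_coeff_ne_zero_of_notMem_span {α β : E} {k a b c d : ℚ}
    (hβ : β ∉ Submodule.span ℚ ({1, α} : Set E)) (hden : (c : E) * α + d ≠ 0)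
    (h : ((a : E) * α + b) / ((c : E) * α + d) = β + k * α) : c ≠ 0 := by
  rintro rfl
  simp only [Rat.cast_zero, zero_mul, zero_add] at hden h
  refine hβ (Submodule.mem_span_pair.mpr ⟨b / d, a / d - k, ?_⟩)
  simp only [Rat.smul_def]
  push_cast
  field_simp at h ⊢
  linear_combination h

theorem exists_natDegree_eq_three_aeval_eq_zero_of_moebius {α β : E}
    {k n ak bk ck dk an bn cn dn : ℚ} (hkn : k ≠ n) (hck : ck ≠ 0) (hcn : cn ≠ 0)
    (hk : (ak : E) * α + bk = (β + k * α) * (ck * α + dk))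
    (hn : (an : E) * α + bn = (β + n * α) * (cn * α + dn)) :
    ∃ P : ℚ[X], P.natDegree = 3 ∧ aeval α P = 0 := by
  refine ⟨C (k - n) * X * (C ck * X + C dk) * (C cn * X + C dn)
      - (C ak * X + C bk) * (C cn * X + C dn) + (C an * X + C bn) * (C ck * X + C dk), ?_, ?_⟩
  · compute_degree!
    exact ⟨⟨sub_ne_zero.mpr hkn, hck⟩, hcn⟩
  · simp only [map_add, map_sub, map_mul, aeval_C, aeval_X, eq_ratCast]
    linear_combination (↑ck * α + ↑dk) * hn - (↑cn * α + ↑dn) * hk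

theorem IntermediateField.mem_span_pow_of_mem_adjoin_simple {K L : Type*} [Field K] [Field L]
    [Algebra K L] {α y : L} (hα : IsAlgebraic K α) (hy : y ∈ K⟮α⟯) :
    y ∈ Submodule.span K (Set.range fun i : Fin (minpoly K α).natDegree => α ^ (i : ℕ)) := by
  rw [← IntermediateField.mem_toSubalgebra, adjoin_simple_toSubalgebra_of_isAlgebraic hα,
    Algebra.adjoin_singleton_eq_range_aeval] at hy
  obtain ⟨f, rfl⟩ := hy
  exact hα.isIntegral.mem_span_pow ⟨f, rfl⟩

theorem Submodule.span_range_pow_le_span_one_self_sq {R A : Type*} [CommSemiring R] [Semiring A]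
    [Algebra R A] (x : A) {m : ℕ} (hm : m ≤ 3) :
    span R (Set.range fun i : Fin m => x ^ (i : ℕ)) ≤ span R {1, x, x ^ 2} := by
  refine span_mono ?_
  rintro _ ⟨i, rfl⟩
  obtain h | h | h : (i : ℕ) = 0 ∨ (i : ℕ) = 1 ∨ (i : ℕ) = 2 := by omega
  all_goals simp [h]

theorem degree_three_from_two_relations_general
    (α β : ℂ) (hβ : β ∉ Submodule.span ℚ ({1, α} : Set ℂ))
    (k n : ℤ) (hkn : k ≠ n)
    (ak bk ck dk : ℚ)
    (hk2 : (ck : ℂ) * α + (dk : ℂ) ≠ 0)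
    (hk3 : ((ak : ℂ) * α + (bk : ℂ)) / ((ck : ℂ) * α + (dk : ℂ)) = β + (k : ℂ) * α)
    (an bn cn dn : ℚ)
    (hn2 : (cn : ℂ) * α + (dn : ℂ) ≠ 0)
    (hn3 : ((an : ℂ) * α + (bn : ℂ)) / ((cn : ℂ) * α + (dn : ℂ)) = β + (n : ℂ) * α) :
    (IsAlgebraic ℚ α ∧ (minpoly ℚ α).natDegree ≤ 3) ∧
      β ∈ Submodule.span ℚ ({1, α, α ^ 2} : Set ℂ) := by
  have hk : ((ak : ℂ) * α + bk) / (ck * α + dk) = β + ((k : ℚ) : ℂ) * α := by exact_mod_cast hk3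
  have hn : ((an : ℂ) * α + bn) / (cn * α + dn) = β + ((n : ℚ) : ℂ) * α := by exact_mod_cast hn3
  obtain ⟨P, hPdeg, hPα⟩ := exists_natDegree_eq_three_aeval_eq_zero_of_moebius
    (Int.cast_injective.ne hkn) (denom_coeff_ne_zero_of_notMem_span hβ hk2 hk)
    (denom_coeff_ne_zero_of_notMem_span hβ hn2 hn)
    ((div_eq_iff hk2).mp hk) ((div_eq_iff hn2).mp hn)
  have hP : P ≠ 0 := ne_zero_of_natDegree_gt (hPdeg ▸ three_pos)
  have hα : IsAlgebraic ℚ α := ⟨P, hP, hPα⟩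
  have hdeg : (minpoly ℚ α).natDegree ≤ 3 := hPdeg ▸ natDegree_le_of_dvd (minpoly.dvd ℚ α hPα) hP
  have hβα : β ∈ ℚ⟮α⟯ := by
    rw [eq_sub_of_add_eq hk.symm]
    have hαmem : α ∈ ℚ⟮α⟯ := mem_adjoin_simple_self ℚ α
    have hq (q : ℚ) : (q : ℂ) ∈ ℚ⟮α⟯ := SubfieldClass.ratCast_mem _ q
    exact sub_mem (div_mem (add_mem (mul_mem (hq _) hαmem) (hq _))
      (add_mem (mul_mem (hq _) hαmem) (hq _))) (mul_mem (hq _) hαmem)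
  exact ⟨⟨hα, hdeg⟩, Submodule.span_range_pow_le_span_one_self_sq α hdeg
    (mem_span_pow_of_mem_adjoin_simple hα hβα)⟩

/-- If `β ∉ ℚ + ℚα` and for two distinct integers `k ≠ n` there are
rational fractional linear transformations sending `α` to `β + kα` and to `β + nα`
respectively, then `α` is algebraic of degree at most 3 over `ℚ` and
`β ∈ ℚ + ℚα + ℚα²`. -/
theorem degree_three_from_two_relations
    (α β : ℂ) (hβ : β ∉ Submodule.span ℚ ({1, α} : Set ℂ))
    (k n : ℤ) (hkn : k ≠ n)
    (ak bk ck dk : ℚ) (hk1 : ak * dk - bk * ck ≠ 0)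
    (hk2 : (ck : ℂ) * α + (dk : ℂ) ≠ 0)
    (hk3 : ((ak : ℂ) * α + (bk : ℂ)) / ((ck : ℂ) * α + (dk : ℂ)) = β + (k : ℂ) * α)
    (an bn cn dn : ℚ) (hn1 : an * dn - bn * cn ≠ 0)
    (hn2 : (cn : ℂ) * α + (dn : ℂ) ≠ 0)
    (hn3 : ((an : ℂ) * α + (bn : ℂ)) / ((cn : ℂ) * α + (dn : ℂ)) = β + (n : ℂ) * α) :
    (IsAlgebraic ℚ α ∧ (minpoly ℚ α).natDegree ≤ 3) ∧
      β ∈ Submodule.span ℚ ({1, α, α ^ 2} : Set ℂ) :=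
  degree_three_from_two_relations_general α β hβ k n hkn ak bk ck dk hk2 hk3 an bn cn dn hn2 hn3
end

section
/- Let τ ∈ ℂ with Im(τ) > 0, let α ∈ ℂ, and let Γ ⊆ ℂ² be the additive subgroup generated by (1, 0), (0, 1), and (α, τ). Then: (a) for every m ∈ ℤ, the image of Γ under the ℂ-linear map (z₁, z₂) ↦ m·z₂ − z₁ equals ℤ + ℤ·(m·τ − α); and (b) for all integers m, n with m > n > (1 + Im(α))/Im(τ), there is no μ ∈ ℂ, μ ≠ 0, with μ·(ℤ + ℤ·(m·τ − α)) = ℤ + ℤ·(n·τ − α). -/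
/-!
Write `L w = ℤ + ℤ w`. If `μ L_w = L_{w'}` with `Im w, Im w' > 0`, then `ν = μ⁻¹` sends the basis
`1, w'` of `L_{w'}` into `L_w`, and the determinant `D` of this integral change of basis satisfies
`|ν|² Im w' = D Im w`; hence `D ≥ 1` and `|ν|² Im w' ≥ Im w`. On the other hand `μ = μ · 1` is a
nonzero point of `L_{w'}`, and when `Im w' > 1` every such point has absolute value at least `1`.
So `Im w ≤ |ν|² Im w' ≤ Im w'`, which fails for `w = mτ - α`, `w' = nτ - α` with `m > n`.
-/

theorem AddSubgroup.mem_closure_triple {G : Type*} [AddCommGroup G] {x y z v : G} :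
    v ∈ AddSubgroup.closure ({x, y, z} : Set G) ↔ ∃ p q r : ℤ, p • x + q • y + r • z = v := by
  rw [← Set.singleton_union, AddSubgroup.closure_union, AddSubgroup.mem_sup]
  simp_rw [AddSubgroup.mem_closure_singleton, AddSubgroup.mem_closure_pair]
  constructor
  · rintro ⟨_, ⟨p, rfl⟩, _, ⟨q, r, rfl⟩, rfl⟩
    exact ⟨p, q, r, by abel⟩
  · rintro ⟨p, q, r, rfl⟩
    exact ⟨_, ⟨p, rfl⟩, _, ⟨q, r, rfl⟩, by abel⟩

namespace Complex

def intLattice (w : ℂ) : Set ℂ := {x | ∃ a b : ℤ, x = (a : ℂ) + (b : ℂ) * w}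

lemma one_mem_intLattice (w : ℂ) : 1 ∈ intLattice w := ⟨1, 0, by simp⟩

lemma self_mem_intLattice (w : ℂ) : w ∈ intLattice w := ⟨0, 1, by simp⟩

lemma image_closure_eq_intLattice (τ α : ℂ) (m : ℤ) :
    (fun v : ℂ × ℂ => (m : ℂ) * v.2 - v.1) ''
        (AddSubgroup.closure ({(1, 0), (0, 1), (α, τ)} : Set (ℂ × ℂ)) : Set (ℂ × ℂ)) =
      intLattice (m * τ - α) := by
  ext x
  simp only [Set.mem_image, SetLike.mem_coe, AddSubgroup.mem_closure_triple]
  constructor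
  · rintro ⟨_, ⟨p, q, r, rfl⟩, rfl⟩
    exact ⟨m * q - p, r, by
      simp only [Prod.smul_mk, zsmul_eq_mul, mul_one, smul_zero, Prod.mk_add_mk, add_zero, zero_add,
        Int.cast_sub, Int.cast_mul]
      ring⟩
  · rintro ⟨a, b, rfl⟩
    exact ⟨_, ⟨-a, 0, b, rfl⟩, by
      simp only [neg_smul, Prod.smul_mk, zsmul_eq_mul, mul_one, smul_zero, Prod.neg_mk, neg_zero,
        zero_smul, add_zero, Prod.mk_add_mk, zero_add]
      ring⟩

lemma one_le_normSq_of_mem_intLattice {w x : ℂ} (hw : 1 < w.im) (hx : x ∈ intLattice w)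
    (hx0 : x ≠ 0) : 1 ≤ normSq x := by
  obtain ⟨a, b, rfl⟩ := hx
  have normSq_eq : normSq (a + b * w) = (a + b * w.re) ^ 2 + (b * w.im) ^ 2 := by
    simp [normSq_apply, sq]
  rw [normSq_eq]
  rcases eq_or_ne b 0 with rfl | hb
  · have ha : a ≠ 0 := by rintro rfl; simp at hx0
    have : (1 : ℝ) ≤ (a : ℝ) ^ 2 := mod_cast (one_le_sq_iff_one_le_abs _).mpr (Int.one_le_abs ha)
    simpa using this
  · have : (1 : ℝ) ≤ (b : ℝ) ^ 2 := mod_cast (one_le_sq_iff_one_le_abs _).mpr (Int.one_le_abs hb)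
    nlinarith [sq_nonneg ((a : ℝ) + b * w.re), mul_le_mul_of_nonneg_right this (sq_nonneg w.im)]

lemma normSq_mul_im_eq_det {w w' ν : ℂ} {a b c d : ℤ} (hν : ν = a + b * w)
    (hνw' : ν * w' = c + d * w) : normSq ν * w'.im = (a * d - b * c) * w.im := by
  have key : (starRingEnd ℂ ν * (ν * w')).im = normSq ν * w'.im := by
    rw [← mul_assoc, ← normSq_eq_conj_mul_self, im_ofReal_mul]
  rw [← key, hνw', hν]
  simp only [map_add, map_intCast, map_mul, mul_im, add_re, intCast_re, mul_re, conj_re, intCast_im,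
    conj_im, mul_neg, zero_mul, neg_zero, sub_zero, add_im, add_zero, zero_add, neg_mul]
  ring

lemma im_le_normSq_mul_im {w w' ν : ℂ} (hw : 0 < w.im) (hw' : 0 < w'.im) (hν0 : ν ≠ 0)
    (hν : ν ∈ intLattice w) (hνw' : ν * w' ∈ intLattice w) : w.im ≤ normSq ν * w'.im := by
  obtain ⟨a, b, hab⟩ := hν
  obtain ⟨c, d, hcd⟩ := hνw'
  rw [normSq_mul_im_eq_det hab hcd]
  have det_pos : (0 : ℝ) < a * d - b * c :=
    pos_of_mul_pos_left (normSq_mul_im_eq_det hab hcd ▸ mul_pos (normSq_pos.2 hν0) hw') hw.le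
  have one_le_det : (1 : ℝ) ≤ a * d - b * c := by exact_mod_cast det_pos
  exact le_mul_of_one_le_left hw.le one_le_det

theorem image_mul_intLattice_ne {w w' μ : ℂ} (hw' : 1 < w'.im) (hlt : w'.im < w.im)
    (hμ : μ ≠ 0) : (fun x => μ * x) '' intLattice w ≠ intLattice w' := by
  intro h
  have hμ_mem : μ ∈ intLattice w' := h ▸ ⟨1, one_mem_intLattice w, mul_one μ⟩
  obtain ⟨ν, hν, hμν : μ * ν = 1⟩ : (1 : ℂ) ∈ (fun x => μ * x) '' intLattice w :=
    h ▸ one_mem_intLattice w'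
  obtain ⟨y, hy, hμy : μ * y = w'⟩ : w' ∈ (fun x => μ * x) '' intLattice w :=
    h ▸ self_mem_intLattice w'
  have hνw' : ν * w' = y := by rw [← hμy, ← mul_assoc, mul_comm ν, hμν, one_mul]
  have hν0 : ν ≠ 0 := right_ne_zero_of_mul_eq_one hμν
  have hw_le := im_le_normSq_mul_im (by linarith) (by linarith) hν0 hν (hνw' ▸ hy)
  have hμ_ge := one_le_normSq_of_mem_intLattice hw' hμ_mem hμ
  have hμν_normSq : normSq μ * normSq ν = 1 := by rw [← normSq_mul, hμν, normSq_one]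
  nlinarith [normSq_nonneg ν]

end Complex

open Complex in
/-- For `Γ` generated by `(1,0), (0,1), (α,τ)` with `Im τ > 0`:
(a) the image of `Γ` under `(z₁,z₂) ↦ mz₂ - z₁` is the lattice `ℤ + ℤ(mτ - α)`;
(b) for integers `m > n > (1 + Im α)/Im τ` the lattices `ℤ + ℤ(mτ - α)` and
`ℤ + ℤ(nτ - α)` are not equivalent under any nonzero complex scalar. -/
theorem nonisomorphic_quotient_curves
    (τ α : ℂ) (hτ : 0 < τ.im)
    (Γ : AddSubgroup (ℂ × ℂ))
    (hΓ : Γ = AddSubgroup.closure ({(1, 0), (0, 1), (α, τ)} : Set (ℂ × ℂ))) :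
    (∀ m : ℤ, (fun v : ℂ × ℂ => (m : ℂ) * v.2 - v.1) '' (Γ : Set (ℂ × ℂ)) =
      {x : ℂ | ∃ a b : ℤ, x = (a : ℂ) + (b : ℂ) * ((m : ℂ) * τ - α)}) ∧
    (∀ m n : ℤ, m > n → (n : ℝ) > (1 + α.im) / τ.im →
      ¬ ∃ μ : ℂ, μ ≠ 0 ∧
        (fun x => μ * x) '' {x : ℂ | ∃ a b : ℤ, x = (a : ℂ) + (b : ℂ) * ((m : ℂ) * τ - α)} =
          {x : ℂ | ∃ a b : ℤ, x = (a : ℂ) + (b : ℂ) * ((n : ℂ) * τ - α)}) := by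
  subst hΓ
  refine ⟨image_closure_eq_intLattice τ α, ?_⟩
  rintro m n hmn hn ⟨μ, hμ, h⟩
  have one_lt_im : 1 < ((n : ℂ) * τ - α).im := by
    rw [gt_iff_lt, div_lt_iff₀ hτ] at hn
    simp only [sub_im, mul_im, intCast_re, intCast_im, zero_mul, add_zero]
    linarith
  have im_lt_im : ((n : ℂ) * τ - α).im < ((m : ℂ) * τ - α).im := by
    have : (n : ℝ) < m := mod_cast hmn
    simpa using mul_lt_mul_of_pos_right this hτ
  exact image_mul_intLattice_ne one_lt_im im_lt_im hμ h
end

section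
/- Let α, β ∈ ℂ \ ℝ and suppose α = x·β + y for some rational numbers x, y. Let Γ ⊆ ℂ² be the additive subgroup generated by (1, 0), (0, 1), and (α, β). Then the one-dimensional complex linear subspace L = {(x·t, t) : t ∈ ℂ} ⊆ ℂ² satisfies: L ∩ Γ is free of rank 2. -/
/-!
Projection to the second coordinate is injective on `L` and maps `Γ` into `ℤ + ℤβ`, so `L ∩ Γ`
embeds into a free abelian group of rank 2. Conversely, clearing the denominators of `x` and `y`,
the points `den x • (x, 1) = (num x, den x)` and `den y β • (x, 1) = (den y α - num y, den y β)`
lie in `L ∩ Γ`, and their second coordinates are `ℤ`-independent because `β ∉ ℝ`.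
-/

open Submodule Module

theorem Module.nonempty_basis_fin_of_injective_of_linearIndependent
    {R G M : Type*} [CommRing R] [IsDomain R] [IsPrincipalIdealRing R]
    [AddCommGroup G] [Module R G] [IsTorsionFree R G] [AddCommGroup M] [Module R M] {n : ℕ}
    (f : G →ₗ[R] M) (hf : Function.Injective f) (v : Fin n → M)
    (hfv : ∀ g, f g ∈ span R (Set.range v)) (w : Fin n → G) (hw : LinearIndependent R w) :
    Nonempty (Basis (Fin n) R G) := by
  let f' := f.codRestrict (span R (Set.range v)) hfv
  have hf' : Function.Injective f' := fun a b hab => hf (congrArg Subtype.val hab)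
  have : Module.Finite R (span R (Set.range v)) :=
    Module.Finite.iff_fg.mpr (fg_span (Set.finite_range v))
  have : Module.Finite R G := Module.Finite.of_injective f' hf'
  have : Module.Free R G := Module.free_of_finite_type_torsion_free'
  have hle : finrank R G ≤ n := by
    simpa using (LinearMap.finrank_le_finrank_of_injective hf').trans (finrank_range_le_card v)
  have hge : n ≤ finrank R G := by simpa using hw.fintype_card_le_finrank
  exact ⟨finBasisOfFinrankEq R G (le_antisymm hle hge)⟩

theorem Prod.mem_span_singleton_mk_one_iff {R : Type*} [CommSemiring R] (c : R) (z : R × R) :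
    z ∈ span R {(c, 1)} ↔ z.1 = c * z.2 := by
  rw [mem_span_singleton]
  constructor
  · rintro ⟨a, rfl⟩
    simp [mul_comm]
  · intro h
    exact ⟨z.2, Prod.ext (by simp [h, mul_comm]) (by simp)⟩

theorem Prod.injOn_snd_span_singleton_mk_one {R : Type*} [CommSemiring R] (c : R) :
    Set.InjOn Prod.snd (span R {(c, (1 : R))} : Set (R × R)) := fun p hp q hq h =>
  Prod.ext (by rw [(mem_span_singleton_mk_one_iff c p).mp hp,
    (mem_span_singleton_mk_one_iff c q).mp hq, h]) h

theorem mk_intCast_add_mem_closure (α β : ℂ) (a b c : ℤ) :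
    ((a + c * α, b + c * β) : ℂ × ℂ) ∈ AddSubgroup.closure {(1, 0), (0, 1), (α, β)} := by
  have hmem : ∀ z ∈ ({(1, 0), (0, 1), (α, β)} : Set (ℂ × ℂ)),
      z ∈ AddSubgroup.closure {(1, 0), (0, 1), (α, β)} := fun z hz => AddSubgroup.subset_closure hz
  have := add_mem (add_mem (zsmul_mem (hmem (1, 0) (by simp)) a)
    (zsmul_mem (hmem (0, 1) (by simp)) b)) (zsmul_mem (hmem (α, β) (by simp)) c)
  simpa [Prod.ext_iff, zsmul_eq_mul, add_assoc] using this

theorem snd_mem_span_of_mem_closure (α β : ℂ) {z : ℂ × ℂ}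
    (hz : z ∈ AddSubgroup.closure {(1, 0), (0, 1), (α, β)}) :
    z.2 ∈ span ℤ (Set.range ![1, β]) := by
  have hone : (1 : ℂ) ∈ span ℤ (Set.range ![1, β]) := subset_span ⟨0, rfl⟩
  have hβ : β ∈ span ℤ (Set.range ![1, β]) := subset_span ⟨1, rfl⟩
  have hle : AddSubgroup.closure {(1, 0), (0, 1), (α, β)} ≤
      (span ℤ (Set.range ![1, β])).toAddSubgroup.comap (AddMonoidHom.snd ℂ ℂ) := by
    rw [AddSubgroup.closure_le]
    simp only [Set.insert_subset_iff, Set.singleton_subset_iff]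
    exact ⟨(zero_mem _ : (0 : ℂ) ∈ span ℤ (Set.range ![1, β])), hone, hβ⟩
  exact hle hz

theorem Complex.linearIndependent_intCast_intCast_mul {a b : ℤ} (ha : a ≠ 0) (hb : b ≠ 0)
    {β : ℂ} (hβ : β.im ≠ 0) : LinearIndependent ℤ ![(a : ℂ), b * β] := by
  rw [LinearIndependent.pair_iff]
  intro m n hmn
  have hsum : (m * a : ℂ) + n * b * β = 0 := by simpa [zsmul_eq_mul, mul_assoc] using hmn
  have hn : n = 0 := by
    have him := congrArg Complex.im hsum
    simp only [Complex.add_im, Complex.mul_im, Complex.intCast_re, Complex.intCast_im,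
      Complex.zero_im] at him
    simpa [hb, hβ] using him
  subst hn
  have hm : (m * a : ℂ) = 0 := by simpa using hsum
  exact ⟨by simpa [ha] using hm, rfl⟩

theorem rational_relation_gives_splitting_line_general
    (α β : ℂ) (hβ : β.im ≠ 0)
    (x y : ℚ) (hxy : α = (x : ℂ) * β + (y : ℂ))
    (Γ : AddSubgroup (ℂ × ℂ))
    (hΓ : Γ = AddSubgroup.closure ({(1, 0), (0, 1), (α, β)} : Set (ℂ × ℂ)))
    (L : Submodule ℂ (ℂ × ℂ))
    (hL : L = Submodule.span ℂ ({((x : ℂ), 1)} : Set (ℂ × ℂ))) :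
    Nonempty (Module.Basis (Fin 2) ℤ ((L.toAddSubgroup ⊓ Γ : AddSubgroup (ℂ × ℂ)))) := by
  subst hΓ hL
  set H := (span ℂ {((x : ℂ), (1 : ℂ))}).toAddSubgroup ⊓
    AddSubgroup.closure {(1, 0), (0, 1), (α, β)}
  have hmemH : ∀ a b c : ℤ, (a + c * α : ℂ) = x * (b + c * β) →
      ((a + c * α, b + c * β) : ℂ × ℂ) ∈ H := fun a b c h =>
    ⟨(Prod.mem_span_singleton_mk_one_iff _ _).mpr h, mk_intCast_add_mem_closure α β a b c⟩
  have hxden : (x.num : ℂ) = x * x.den := by exact_mod_cast (Rat.mul_den_eq_num x).symm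
  have hyden : (y.num : ℂ) = y * y.den := by exact_mod_cast (Rat.mul_den_eq_num y).symm
  let s₁ : H := ⟨_, hmemH x.num x.den 0 (by simp [hxden])⟩
  let s₂ : H := ⟨_, hmemH (-y.num) 0 y.den (by rw [hxy]; push_cast [hyden]; ring)⟩
  let f : H →ₗ[ℤ] ℂ := ((AddMonoidHom.snd ℂ ℂ).comp H.subtype).toIntLinearMap
  have hf : Function.Injective f := fun p q hpq =>
    Subtype.ext (Prod.injOn_snd_span_singleton_mk_one _ p.2.1 q.2.1 hpq)
  refine nonempty_basis_fin_of_injective_of_linearIndependent f hf ![1, β]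
    (fun p => snd_mem_span_of_mem_closure α β p.2.2) ![s₁, s₂] (.of_comp f ?_)
  have himage : f ∘ ![s₁, s₂] = ![((x.den : ℤ) : ℂ), ((y.den : ℤ) : ℂ) * β] := by
    ext i; fin_cases i <;> simp [f, s₁, s₂]
  rw [himage]
  exact Complex.linearIndependent_intCast_intCast_mul (by exact_mod_cast x.den_nz)
    (by exact_mod_cast y.den_nz) hβ

/-- If `α, β ∈ ℂ \ ℝ` with `α = xβ + y` for rationals `x, y`, and `Γ` is
generated by `(1,0), (0,1), (α,β)`, then the complex line `L = {(xt, t) : t ∈ ℂ}`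
meets `Γ` in a subgroup free of rank 2. -/
theorem rational_relation_gives_splitting_line
    (α β : ℂ) (hα : α.im ≠ 0) (hβ : β.im ≠ 0)
    (x y : ℚ) (hxy : α = (x : ℂ) * β + (y : ℂ))
    (Γ : AddSubgroup (ℂ × ℂ))
    (hΓ : Γ = AddSubgroup.closure ({(1, 0), (0, 1), (α, β)} : Set (ℂ × ℂ)))
    (L : Submodule ℂ (ℂ × ℂ))
    (hL : L = Submodule.span ℂ ({((x : ℂ), 1)} : Set (ℂ × ℂ))) :
    Nonempty (Module.Basis (Fin 2) ℤ ((L.toAddSubgroup ⊓ Γ : AddSubgroup (ℂ × ℂ)))) :=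
  rational_relation_gives_splitting_line_general α β hβ x y hxy Γ hΓ L hL
end
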